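/- arXiv:2408.11695 — 5 statements merged into one kernel-verified Lean document; each statement's English description precedes it below -/
import Mathlib

section
/- Let a > 0, b > 0, c > 0, ω ∈ ℝ, and let s > 0 satisfy s^a > |ω|. Then ∫₀^∞ e^{−st} t^{b−1} M^c_{a,b}(−ω t^a) dt = s^{ac−b} / (s^a + ω)^c, where M^c_{a,b}(z) = Σ_{n=0}^∞ (c)_n z^n / (n! Γ(an + b)) is the three-parameter (Prabhakar) Mittag-Leffler function and (c)_n is the Pochhammer symbol. -/
/-!
Expand `M^c_{a,b}` termwise. The Laplace transform of `t^{an+b-1}` is `Γ(an+b)/s^{an+b}`, which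
cancels the Gamma factor of the `n`-th coefficient, leaving `s^{-b} ∑ (c)ₙ/n! (-ω/s^a)ⁿ`: the
binomial series of `(1 + ω/s^a)^{-c}`. Exchanging sum and integral is legitimate because the same
computation with absolute values gives the series at `|ω|/s^a < 1`.
-/

open MeasureTheory Real Filter

/-- The three-parameter (Prabhakar) Mittag-Leffler function
`M^c_{a,b}(z) = ∑ (c)ₙ zⁿ / (n! Γ(an + b))`, where `(c)ₙ` is the Pochhammer symbol. -/
noncomputable def prabhakarML (a b c z : ℝ) : ℝ :=
  ∑' n : ℕ, (ascPochhammer ℝ n).eval c * z ^ n / (n.factorial * Real.Gamma (a * n + b))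

theorem Ring.choose_add_sub_one_eq_ascPochhammer_eval_div {K : Type*} [Field K] [CharZero K]
    (c : K) (n : ℕ) :
    Ring.choose (c + n - 1) n = (ascPochhammer K n).eval c / n.factorial := by
  rw [Ring.choose_eq_smul, Polynomial.descPochhammer_smeval_eq_ascPochhammer,
    Polynomial.ascPochhammer_smeval_eq_eval, smul_eq_mul, inv_mul_eq_div]
  ring_nf

theorem hasSum_ascPochhammer_eval_div_factorial_mul_pow (c : ℝ) {x : ℝ} (hx : |x| < 1) :
    HasSum (fun n : ℕ => (ascPochhammer ℝ n).eval c / n.factorial * x ^ n) ((1 - x) ^ (-c)) := by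
  have hx' : x ∈ Metric.eball (0 : ℝ) 1 := by
    simpa [enorm_eq_nnnorm, ← NNReal.coe_lt_coe] using hx
  simpa [FormalMultilinearSeries.ofScalars_apply_eq,
    Ring.choose_add_sub_one_eq_ascPochhammer_eval_div,
    rpow_neg (sub_nonneg.2 (lt_of_abs_lt hx).le), mul_comm] using
    (one_div_one_sub_rpow_hasFPowerSeriesOnBall_zero c).hasSum hx'

theorem integral_exp_neg_mul_mul_rpow_sub_one {p s : ℝ} (hp : 0 < p) (hs : 0 < s) :
    ∫ t in Set.Ioi 0, exp (-s * t) * t ^ (p - 1) = Gamma p / s ^ p := by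
  simp_rw [mul_comm (exp _), neg_mul]
  rw [integral_rpow_mul_exp_neg_mul_Ioi hp hs, div_rpow zero_le_one hs.le, one_rpow,
    div_mul_eq_mul_div, one_mul]

theorem integrableOn_exp_neg_mul_mul_rpow_sub_one {p s : ℝ} (hp : 0 < p) (hs : 0 < s) :
    IntegrableOn (fun t => exp (-s * t) * t ^ (p - 1)) (Set.Ioi 0) :=
  .of_integral_ne_zero <| by
    rw [integral_exp_neg_mul_mul_rpow_sub_one hp hs]
    exact (div_pos (Gamma_pos_of_pos hp) (rpow_pos_of_pos hs p)).ne'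

theorem integral_exp_neg_mul_mul_tsum_mul_rpow_sub_one {ι : Type*} [Countable ι] {g p : ι → ℝ}
    {s : ℝ} (hs : 0 < s) (hp : ∀ i, 0 < p i)
    (hg : Summable fun i => |g i| * (Gamma (p i) / s ^ p i)) :
    ∫ t in Set.Ioi 0, exp (-s * t) * ∑' i, g i * t ^ (p i - 1) =
      ∑' i, g i * (Gamma (p i) / s ^ p i) := by
  have integral_term (i : ι) (k : ℝ) :
      ∫ t in Set.Ioi 0, k * (exp (-s * t) * t ^ (p i - 1)) = k * (Gamma (p i) / s ^ p i) := by
    rw [integral_const_mul, integral_exp_neg_mul_mul_rpow_sub_one (hp i) hs]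
  have norm_term (i : ι) : ∀ t ∈ Set.Ioi (0 : ℝ),
      ‖g i * (exp (-s * t) * t ^ (p i - 1))‖ = |g i| * (exp (-s * t) * t ^ (p i - 1)) :=
    fun t ht => by
      have := rpow_pos_of_pos ht (p i - 1)
      rw [norm_mul, Real.norm_eq_abs, Real.norm_of_nonneg (by positivity)]
  calc ∫ t in Set.Ioi 0, exp (-s * t) * ∑' i, g i * t ^ (p i - 1)
      = ∫ t in Set.Ioi 0, ∑' i, g i * (exp (-s * t) * t ^ (p i - 1)) := by
        simp_rw [← tsum_mul_left, mul_left_comm]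
    _ = ∑' i, ∫ t in Set.Ioi 0, g i * (exp (-s * t) * t ^ (p i - 1)) := by
        refine (integral_tsum_of_summable_integral_norm
          (fun i => (integrableOn_exp_neg_mul_mul_rpow_sub_one (hp i) hs).const_mul (g i)) ?_).symm
        simpa only [setIntegral_congr_fun measurableSet_Ioi (norm_term _), integral_term] using hg
    _ = ∑' i, g i * (Gamma (p i) / s ^ p i) := tsum_congr fun i => integral_term i (g i)

theorem rpow_sub_one_mul_prabhakarML (a b c z : ℝ) {t : ℝ} (ht : 0 < t) :
    t ^ (b - 1) * prabhakarML a b c (z * t ^ a) =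
      ∑' n : ℕ, (ascPochhammer ℝ n).eval c * z ^ n / (n.factorial * Gamma (a * n + b)) *
        t ^ (a * n + b - 1) := by
  rw [prabhakarML, ← tsum_mul_left]
  refine tsum_congr fun n => ?_
  rw [add_sub_assoc, rpow_add ht, rpow_mul ht.le, rpow_natCast, mul_pow]
  ring

theorem integral_exp_neg_mul_mul_rpow_mul_prabhakarML {a b c s z : ℝ} (ha : 0 ≤ a) (hb : 0 < b)
    (hc : 0 < c) (hs : 0 < s) (hz : |z| < s ^ a) :
    ∫ t in Set.Ioi 0, exp (-s * t) * t ^ (b - 1) * prabhakarML a b c (z * t ^ a) =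
      ∑' n : ℕ, (ascPochhammer ℝ n).eval c / n.factorial * (z / s ^ a) ^ n / s ^ b := by
  have hsa : 0 < s ^ a := rpow_pos_of_pos hs a
  have hp (n : ℕ) : 0 < a * n + b := by positivity
  have laplace_term (w : ℝ) (n : ℕ) :
      (ascPochhammer ℝ n).eval c * w ^ n / (n.factorial * Gamma (a * n + b)) *
        (Gamma (a * n + b) / s ^ (a * n + b)) =
      (ascPochhammer ℝ n).eval c / n.factorial * (w / s ^ a) ^ n / s ^ b := by
    have := (Gamma_pos_of_pos (hp n)).ne'
    rw [rpow_add hs, rpow_mul hs.le, rpow_natCast, div_pow]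
    field_simp
  have summable_abs : Summable fun n : ℕ =>
      |(ascPochhammer ℝ n).eval c * z ^ n / (n.factorial * Gamma (a * n + b))| *
        (Gamma (a * n + b) / s ^ (a * n + b)) := by
    have hz' : |(|z| / s ^ a)| < 1 := by rwa [abs_div, abs_abs, abs_of_pos hsa, div_lt_one hsa]
    refine ((hasSum_ascPochhammer_eval_div_factorial_mul_pow c hz').div_const (s ^ b)).summable
      |>.congr fun n => ?_
    rw [← laplace_term, abs_div, abs_mul, abs_mul, abs_pow, abs_of_pos (ascPochhammer_pos n c hc),
      Nat.abs_cast, abs_of_pos (Gamma_pos_of_pos (hp n))]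
  rw [setIntegral_congr_fun measurableSet_Ioi fun t ht => by
      rw [mul_assoc, rpow_sub_one_mul_prabhakarML a b c z ht],
    integral_exp_neg_mul_mul_tsum_mul_rpow_sub_one hs hp summable_abs]
  simp_rw [laplace_term]

theorem laplace_prabhakarML
    (a b c ω : ℝ) (ha : 0 < a) (hb : 0 < b) (hc : 0 < c)
    (s : ℝ) (hs : 0 < s) (hsa : |ω| < s ^ a) :
    ∫ t in Set.Ioi (0 : ℝ),
        Real.exp (-s * t) * t ^ (b - 1) * prabhakarML a b c (-ω * t ^ a) =
      s ^ (a * c - b) / (s ^ a + ω) ^ c := by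
  have hsa0 : 0 < s ^ a := rpow_pos_of_pos hs a
  have hsω : 0 < s ^ a + ω := by linarith [neg_abs_le ω]
  have hx : |-ω / s ^ a| < 1 := by rwa [abs_div, abs_neg, abs_of_pos hsa0, div_lt_one hsa0]
  rw [integral_exp_neg_mul_mul_rpow_mul_prabhakarML ha.le hb hc hs (by rwa [abs_neg]),
    tsum_div_const, (hasSum_ascPochhammer_eval_div_factorial_mul_pow c hx).tsum_eq,
    neg_div, sub_neg_eq_add, one_add_div hsa0.ne', rpow_neg (by positivity),
    div_rpow hsω.le hsa0.le, inv_div, ← rpow_mul hs.le, rpow_sub hs, div_right_comm]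
end

section
/- Let β ∈ (0,1), ν ≥ 0, w ∈ ℝ and t > 0. Then ∫₀^t e^{−νu} u^{β−1} M_{β,β}(w u^β) du = e^{−νt} Σ_{m=0}^∞ ν^m t^{β+m} M_{β, β+m+1}(w t^β), where M_{a,b}(z) = Σ_{n=0}^∞ z^n / Γ(an + b) is the two-parameter Mittag-Leffler function. -/
/-!
Expanding `e^(-νu) = e^(-νt) ∑ νᵐ (t - u)ᵐ / m!` reduces the integral to the
Riemann–Liouville integrals `∫₀ᵗ (t - u)ᵐ u^(β-1) M_{β,β}(w u^β) du`. Expanding `M_{β,β}` as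
well, each term is a Beta integral `∫₀ᵗ (t - u)ᵐ u^(c-1) du = m! Γ(c) t^(c+m) / Γ(c+m+1)` with
`c = βn + β`, so the factor `Γ(βn + β)` cancels and the inner sum is
`m! t^(β+m) M_{β,β+m+1}(w t^β)`. Both exchanges of sum and integral are dominated convergence.
-/

open MeasureTheory Real Filter

/-- The two-parameter Mittag-Leffler function `M_{a,b}(z) = ∑ zⁿ / Γ(an + b)`. -/
noncomputable def mittagLeffler (a b z : ℝ) : ℝ :=
  ∑' n : ℕ, z ^ n / Real.Gamma (a * n + b)

open Set intervalIntegral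
open scoped Nat Interval

theorem rpow_sub_two_div_exp_le_Gamma {R x : ℝ} (hR : 1 ≤ R) (hx : 2 ≤ x) :
    R ^ (x - 2) / exp R ≤ Gamma x := by
  set n := ⌊x - 1⌋₊
  have hn : (1 : ℝ) ≤ n := by exact_mod_cast Nat.le_floor (by push_cast; linarith)
  have hnx : (n : ℝ) + 1 ≤ x := by linarith [Nat.floor_le (by linarith : 0 ≤ x - 1)]
  have hxn : x - 2 ≤ n := by linarith [Nat.lt_floor_add_one (x - 1)]
  calc R ^ (x - 2) / exp R ≤ R ^ n / exp R := by
        gcongr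
        rw [← rpow_natCast]
        exact rpow_le_rpow_of_exponent_le hR hxn
    _ ≤ n ! := (div_le_iff₀ (exp_pos R)).2 <| by
        have := pow_div_factorial_le_exp R (by linarith) n
        rwa [div_le_iff₀ (by positivity), mul_comm] at this
    _ = Gamma (n + 1) := (Gamma_nat_eq_factorial n).symm
    _ ≤ Gamma x := Gamma_strictMonoOn_Ici.monotoneOn (by simp; linarith) (by simp; linarith) hnx

/-- With `R ^ a = |z| + 1`, the bound `Γ(x) ≥ R ^ (x - 2) / e ^ R` dominates the terms by a
geometric series of ratio `|z| / (|z| + 1)`. -/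
theorem summable_pow_div_Gamma {a : ℝ} (ha : 0 < a) (b z : ℝ) :
    Summable fun n : ℕ => z ^ n / Gamma (a * n + b) := by
  set R := (|z| + 1) ^ a⁻¹
  have hR : 1 ≤ R := one_le_rpow (by linarith [abs_nonneg z]) (by positivity)
  have hRa : R ^ a = |z| + 1 := by
    rw [← rpow_mul (by positivity), inv_mul_cancel₀ ha.ne', rpow_one]
  have hgeom : Summable fun n : ℕ => exp R * R ^ (2 - b) * (|z| / (|z| + 1)) ^ n :=
    (summable_geometric_of_lt_one (by positivity)
      ((div_lt_one (by positivity)).2 (by linarith))).mul_left _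
  refine hgeom.of_norm_bounded_eventually ?_
  have hlarge : ∀ᶠ n : ℕ in atTop, 2 ≤ a * n + b :=
    (tendsto_natCast_atTop_atTop.const_mul_atTop ha |>.atTop_add
      tendsto_const_nhds).eventually_ge_atTop 2
  filter_upwards [Nat.cofinite_eq_atTop ▸ hlarge] with n hn
  have hsplit : R ^ (a * n + b - 2) = (|z| + 1) ^ n * R ^ (b - 2) := by
    rw [sub_eq_add_neg, add_assoc, rpow_add (by positivity), rpow_mul (by positivity), hRa,
      rpow_natCast, ← sub_eq_add_neg]
  have hΓ := rpow_sub_two_div_exp_le_Gamma hR hn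
  rw [hsplit] at hΓ
  have hΓpos : 0 < Gamma (a * n + b) := (by positivity : (0 : ℝ) < _).trans_le hΓ
  rw [norm_div, norm_pow, Real.norm_eq_abs, Real.norm_eq_abs, abs_of_pos hΓpos, div_pow,
    div_le_iff₀ hΓpos]
  calc |z| ^ n = exp R * R ^ (2 - b) * (|z| ^ n / (|z| + 1) ^ n) *
        ((|z| + 1) ^ n * R ^ (b - 2) / exp R) := by
        rw [rpow_sub (by linarith), rpow_sub (by linarith)]; field_simp
    _ ≤ _ := by gcongr

theorem hasSum_mittagLeffler {a : ℝ} (ha : 0 < a) (b z : ℝ) :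
    HasSum (fun n : ℕ => z ^ n / Gamma (a * n + b)) (mittagLeffler a b z) :=
  (summable_pow_div_Gamma ha b z).hasSum

theorem abs_pow_div_Gamma_le {a b z r : ℝ} (ha : 0 ≤ a) (hb : 0 < b) (hz : |z| ≤ r)
    (n : ℕ) :
    |z ^ n / Gamma (a * n + b)| ≤ r ^ n / Gamma (a * n + b) := by
  have hΓ : 0 < Gamma (a * n + b) := Gamma_pos_of_pos (by positivity)
  rw [abs_div, abs_pow, abs_of_pos hΓ]
  gcongr

theorem continuous_mittagLeffler {a b : ℝ} (ha : 0 < a) (hb : 0 < b) :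
    Continuous (mittagLeffler a b) := by
  refine continuous_iff_continuousAt.2 fun z => ?_
  have hcont : ContinuousOn (fun x => ∑' n : ℕ, x ^ n / Gamma (a * n + b))
      (Icc (-(|z| + 1)) (|z| + 1)) :=
    continuousOn_tsum (fun n => (continuousOn_pow n).div_const _)
      (summable_pow_div_Gamma ha b (|z| + 1))
      fun n x hx => (Real.norm_eq_abs _).trans_le (abs_pow_div_Gamma_le ha.le hb (abs_le.2 hx) n)
  exact hcont.continuousAt (Icc_mem_nhds (by linarith [neg_abs_le z]) (by linarith [le_abs_self z]))

theorem hasSum_intervalIntegral_of_norm_le_mul {ι E : Type*} [Countable ι]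
    [NormedAddCommGroup E] [NormedSpace ℝ E] {μ : Measure ℝ} {a b : ℝ}
    {F : ι → ℝ → E} {f : ℝ → E} {C : ι → ℝ} {g : ℝ → ℝ}
    (hF : ∀ n, IntervalIntegrable (F n) μ a b) (hC : Summable C)
    (hg : IntervalIntegrable g μ a b)
    (h_bound : ∀ n, ∀ u ∈ Ι a b, ‖F n u‖ ≤ C n * g u)
    (h_lim : ∀ u ∈ Ι a b, HasSum (F · u) (f u)) :
    HasSum (fun n => ∫ u in a..b, F n u ∂μ) (∫ u in a..b, f u ∂μ) :=
  hasSum_integral_of_dominated_convergence (fun n u => C n * g u)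
    (fun n => (hF n).def'.aestronglyMeasurable) (fun n => ae_of_all _ (h_bound n))
    (ae_of_all _ fun u _ => hC.mul_right (g u))
    (by simpa only [tsum_mul_right] using hg.const_mul (∑' n, C n)) (ae_of_all _ h_lim)

theorem intervalIntegrable_sub_pow_mul_rpow {c : ℝ} (hc : 0 < c) (t : ℝ) (m : ℕ) :
    IntervalIntegrable (fun u => (t - u) ^ m * u ^ (c - 1)) volume 0 t :=
  (intervalIntegrable_rpow' (by linarith)).continuousOn_mul (by fun_prop)

theorem integral_sub_pow_mul_rpow {c t : ℝ} (hc : 0 < c) (ht : 0 < t) (m : ℕ) :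
    ∫ u in (0 : ℝ)..t, (t - u) ^ m * u ^ (c - 1) =
      m ! * Gamma c / Gamma (c + m + 1) * t ^ (c + m) := by
  induction m generalizing c with
  | zero =>
    simp only [pow_zero, one_mul]
    rw [integral_rpow (Or.inl (by linarith)), sub_add_cancel, zero_rpow hc.ne']
    simp only [sub_zero, Nat.factorial_zero, Nat.cast_one, one_mul, CharP.cast_eq_zero, add_zero,
      Gamma_add_one hc.ne']
    field_simp
  | succ m ih =>
    have hsplit : ∫ u in (0 : ℝ)..t, (t - u) ^ (m + 1) * u ^ (c - 1) =
        t * (∫ u in (0 : ℝ)..t, (t - u) ^ m * u ^ (c - 1)) -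
          ∫ u in (0 : ℝ)..t, (t - u) ^ m * u ^ (c + 1 - 1) := by
      rw [← intervalIntegral.integral_const_mul,
        ← integral_sub ((intervalIntegrable_sub_pow_mul_rpow hc t m).const_mul t)
          (intervalIntegrable_sub_pow_mul_rpow (by linarith) t m)]
      refine integral_congr fun u hu => ?_
      rw [uIcc_of_le ht.le] at hu
      rw [add_sub_cancel_right, ← sub_add_cancel c 1, rpow_add_one' hu.1 (by simpa using hc.ne'),
        sub_add_cancel]
      ring
    rw [hsplit, ih hc, ih (by linarith : 0 < c + 1), Gamma_add_one hc.ne']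
    have hΓ_shift : Gamma (c + 1 + m + 1) = (c + m + 1) * Gamma (c + m + 1) := by
      rw [← Gamma_add_one (by positivity)]; ring_nf
    have hΓ_succ : Gamma (c + ↑(m + 1) + 1) = (c + m + 1) * Gamma (c + m + 1) := by
      rw [← hΓ_shift]; push_cast; ring_nf
    have ht_shift : t ^ (c + 1 + m) = t ^ (c + m) * t := by
      rw [← rpow_add_one ht.ne']; ring_nf
    have ht_succ : t ^ (c + ↑(m + 1)) = t ^ (c + m) * t := by
      rw [← ht_shift]; push_cast; ring_nf
    have := (Gamma_pos_of_pos (by positivity : 0 < c + m + 1)).ne'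
    rw [hΓ_shift, hΓ_succ, ht_shift, ht_succ, Nat.factorial_succ]
    push_cast
    field_simp
    ring

theorem integral_sub_pow_mul_rpow_mul_mittagLeffler {β c t : ℝ} (hβ : 0 < β) (hc : 0 < c)
    (ht : 0 < t) (w : ℝ) (m : ℕ) :
    ∫ u in (0 : ℝ)..t, (t - u) ^ m * (u ^ (c - 1) * mittagLeffler β c (w * u ^ β)) =
      m ! * t ^ (c + m) * mittagLeffler β (c + m + 1) (w * t ^ β) := by
  set F : ℕ → ℝ → ℝ :=
    fun n u => w ^ n / Gamma (β * n + c) * ((t - u) ^ m * u ^ (β * n + c - 1))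
  have hΓ : ∀ n : ℕ, 0 < Gamma (β * n + c) := fun n => Gamma_pos_of_pos (by positivity)
  have hpow : ∀ n : ℕ, ∀ {u : ℝ}, 0 < u →
      u ^ (β * n + c - 1) = (u ^ β) ^ n * u ^ (c - 1) := by
    intro n u hu
    rw [← rpow_natCast, ← rpow_mul hu.le, ← rpow_add hu]
    ring_nf
  have hbound : ∀ n, ∀ u ∈ Ι 0 t,
      ‖F n u‖ ≤ t ^ m * ((|w| * t ^ β) ^ n / Gamma (β * n + c)) * u ^ (c - 1) := by
    intro n u hu
    rw [uIoc_of_le ht.le] at hu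
    have hu0 : 0 ≤ u ^ β := rpow_nonneg hu.1.le β
    have hu1 : 0 < u ^ (c - 1) := rpow_pos_of_pos hu.1 (c - 1)
    have hut : |t - u| ≤ t := abs_le.2 ⟨by linarith [hu.2], by linarith [hu.1]⟩
    have hut' : (u ^ β) ^ n ≤ (t ^ β) ^ n :=
      pow_le_pow_left₀ hu0 (rpow_le_rpow hu.1.le hu.2 hβ.le) n
    simp only [F, Real.norm_eq_abs, abs_mul, abs_div, abs_pow, abs_of_pos (hΓ n), hpow n hu.1,
      abs_of_nonneg hu0, abs_of_pos hu1]
    calc |w| ^ n / Gamma (β * n + c) * (|t - u| ^ m * ((u ^ β) ^ n * u ^ (c - 1)))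
        ≤ |w| ^ n / Gamma (β * n + c) * (t ^ m * ((t ^ β) ^ n * u ^ (c - 1))) := by gcongr
      _ = _ := by ring
  have hlim : ∀ u ∈ Ι 0 t,
      HasSum (F · u) ((t - u) ^ m * (u ^ (c - 1) * mittagLeffler β c (w * u ^ β))) := by
    intro u hu
    rw [uIoc_of_le ht.le] at hu
    have h := (hasSum_mittagLeffler hβ c (w * u ^ β)).mul_left ((t - u) ^ m * u ^ (c - 1))
    rw [mul_assoc] at h
    refine h.congr_fun fun n => ?_
    simp only [F, hpow n hu.1, mul_pow]
    ring
  have hsum := hasSum_intervalIntegral_of_norm_le_mul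
    (fun n => (intervalIntegrable_sub_pow_mul_rpow (by positivity) t m).const_mul _)
    ((summable_pow_div_Gamma hβ c _).mul_left _) (intervalIntegrable_rpow' (by linarith))
    hbound hlim
  have hterm : ∀ n : ℕ, ∫ u in (0 : ℝ)..t, F n u =
      m ! * t ^ (c + m) * ((w * t ^ β) ^ n / Gamma (β * n + (c + m + 1))) := by
    intro n
    rw [intervalIntegral.integral_const_mul, integral_sub_pow_mul_rpow (by positivity) ht,
      show β * n + c + m = β * n + (c + m) by ring, rpow_add ht, rpow_mul ht.le, rpow_natCast,
      add_assoc (β * n)]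
    have := (hΓ n).ne'
    field_simp
    ring
  have h := (hasSum_mittagLeffler hβ (c + m + 1) (w * t ^ β)).mul_left (m ! * t ^ (c + m))
  rw [← funext hterm] at h
  exact hsum.unique h

theorem hasSum_integral_exp_mul {ν t : ℝ} (ht : 0 ≤ t) {f : ℝ → ℝ}
    (hf : IntervalIntegrable f volume 0 t) :
    HasSum
      (fun m : ℕ => exp (-ν * t) * (ν ^ m / m !) * ∫ u in (0 : ℝ)..t, (t - u) ^ m * f u)
      (∫ u in (0 : ℝ)..t, exp (-ν * u) * f u) := by
  have hbound : ∀ (m : ℕ), ∀ u ∈ Ι 0 t,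
      ‖exp (-ν * t) * (ν ^ m / m !) * ((t - u) ^ m * f u)‖ ≤
        exp (-ν * t) * ((|ν| * t) ^ m / m !) * |f u| := by
    intro m u hu
    rw [uIoc_of_le ht] at hu
    have hut : |t - u| ≤ t := abs_le.2 ⟨by linarith [hu.2], by linarith [hu.1]⟩
    calc _ = exp (-ν * t) * (|ν| ^ m / m !) * (|t - u| ^ m * |f u|) := by
          simp only [Real.norm_eq_abs, abs_mul, abs_div, abs_pow, abs_exp, Nat.abs_cast]
      _ ≤ exp (-ν * t) * (|ν| ^ m / m !) * (t ^ m * |f u|) := by gcongr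
      _ = _ := by ring
  have hlim : ∀ u ∈ Ι 0 t,
      HasSum (fun m : ℕ => exp (-ν * t) * (ν ^ m / m !) * ((t - u) ^ m * f u))
        (exp (-ν * u) * f u) := by
    intro u _
    have h := ((NormedSpace.expSeries_div_hasSum_exp (ν * (t - u))).mul_left
      (exp (-ν * t))).mul_right (f u)
    rw [← exp_eq_exp_ℝ, ← exp_add, show -ν * t + ν * (t - u) = -ν * u by ring] at h
    refine h.congr_fun fun m => ?_
    rw [mul_pow]
    ring
  simpa only [intervalIntegral.integral_const_mul] using
    hasSum_intervalIntegral_of_norm_le_mul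
      (fun m => (hf.continuousOn_mul (by fun_prop)).const_mul _)
      ((Real.summable_pow_div_factorial _).mul_left _) hf.abs hbound hlim

theorem integral_exp_mul_mittagLeffler_general
    (β ν w : ℝ) (hβ : β ∈ Set.Ioo (0 : ℝ) 1) (t : ℝ) (ht : 0 < t) :
    ∫ u in (0 : ℝ)..t, Real.exp (-ν * u) * u ^ (β - 1) * mittagLeffler β β (w * u ^ β) =
      Real.exp (-ν * t) *
        ∑' m : ℕ, ν ^ m * t ^ (β + (m : ℝ)) * mittagLeffler β (β + m + 1) (w * t ^ β) := by
  have hβ0 := hβ.1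
  have hf : IntervalIntegrable (fun u => u ^ (β - 1) * mittagLeffler β β (w * u ^ β))
      volume 0 t :=
    (intervalIntegrable_rpow' (by linarith)).mul_continuousOn <|
      ((continuous_mittagLeffler hβ0 hβ0).comp
        (continuous_const.mul (continuous_rpow_const hβ0.le))).continuousOn
  simp_rw [mul_assoc (exp _), ← (hasSum_integral_exp_mul ht.le hf).tsum_eq,
    integral_sub_pow_mul_rpow_mul_mittagLeffler hβ0 hβ0 ht, ← tsum_mul_left]
  refine tsum_congr fun m => ?_
  have := Nat.factorial_pos m
  field_simp

theorem integral_exp_mul_mittagLeffler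
    (β ν w : ℝ) (hβ : β ∈ Set.Ioo (0 : ℝ) 1) (hν : 0 ≤ ν) (t : ℝ) (ht : 0 < t) :
    ∫ u in (0 : ℝ)..t, Real.exp (-ν * u) * u ^ (β - 1) * mittagLeffler β β (w * u ^ β) =
      Real.exp (-ν * t) *
        ∑' m : ℕ, ν ^ m * t ^ (β + (m : ℝ)) * mittagLeffler β (β + m + 1) (w * t ^ β) :=
  integral_exp_mul_mittagLeffler_general β ν w hβ t ht
end

section
/- Let Λ₀ > 0, α ∈ (0,1), γ > 0, ν > 0, β ∈ (0,1), and set w = (α−1)γ + ν^β with w ≠ 0. Define λ(t) = Λ₀ [ (ν^β − γ)/w + (αγ e^{−νt}/w) · Σ_{m=0}^∞ ν^m t^m M_{β, m+1}(w t^β) ], where M_{a,b}(z) = Σ_{n=0}^∞ z^n / Γ(an + b). Then for every t > 0, ∫₀^t λ(u) du = Λ₀ [ ((ν^β − γ)/w) t + (αγ e^{−νt}/w) · Σ_{m=0}^∞ Σ_{n=0}^∞ ν^{m+n} t^{m+n+1} M_{β, m+n+2}(w t^β) ]. -/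
open MeasureTheory Real Filter

/-!
Expanding every Mittag-Leffler function turns both series into double power series in `t` with
terms `νᵖ wᵏ t^(p + βk + s) / Γ(p + βk + s + 1)`. Since the Euler integral gives
`Γ(e + 1) ≥ Rᵉ e^(-R)` for all `R, e ≥ 0`, these are dominated by geometric series, locally
uniformly in `t`, as soon as `β > 0`. Let `F` be the series inside `λ` and `G` the double series of the claim,
regrouped as `∑ₚ (p + 1) νᵖ t^(p+1) M_{β,p+2}(w t^β)`. Differentiating termwise, `G' = F + ν G`,
i.e. `(e^(-νt) G)' = e^(-νt) F`, and `G(0) = 0`; the fundamental theorem of calculus concludes.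
-/

lemma rpow_mul_exp_neg_le_Gamma {R y : ℝ} (hR : 0 ≤ R) (hy : 0 ≤ y) :
    R ^ y * exp (-R) ≤ Gamma (y + 1) := by
  have hint : IntegrableOn (fun x : ℝ => exp (-x) * x ^ y) (Set.Ioi 0) := by
    simpa using GammaIntegral_convergent (s := y + 1) (by linarith)
  rw [Gamma_eq_integral (by linarith), add_sub_cancel_right]
  calc R ^ y * exp (-R) = ∫ x in Set.Ioi R, R ^ y * exp (-x) := by
        rw [integral_const_mul, integral_exp_neg_Ioi]
    _ ≤ ∫ x in Set.Ioi R, exp (-x) * x ^ y :=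
        setIntegral_mono_on ((integrableOn_exp_neg_Ioi R).const_mul _)
          (hint.mono_set (Set.Ioi_subset_Ioi hR)) measurableSet_Ioi fun x hx => by
            rw [mul_comm]
            gcongr
            exact le_of_lt hx
    _ ≤ ∫ x in Set.Ioi 0, exp (-x) * x ^ y :=
        setIntegral_mono_set hint
          ((ae_restrict_iff' measurableSet_Ioi).2 (ae_of_all _ fun x hx =>
            mul_nonneg (exp_pos _).le (rpow_nonneg (le_of_lt hx) _)))
          (Set.Ioi_subset_Ioi hR).eventuallyLE

lemma abs_rpow_div_Gamma_le {M ρ e x : ℝ} (hM : 0 < M) (hρ : 0 < ρ) (he : 0 ≤ e)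
    (hx : |x| ≤ M) : |x ^ e| / Gamma (e + 1) ≤ exp (M / ρ) * ρ ^ e := by
  calc |x ^ e| / Gamma (e + 1) ≤ M ^ e / ((M / ρ) ^ e * exp (-(M / ρ))) :=
        div_le_div₀ (by positivity) ((abs_rpow_le_abs_rpow x e).trans
          (rpow_le_rpow (abs_nonneg x) hx he)) (by positivity)
          (rpow_mul_exp_neg_le_Gamma (by positivity) he)
    _ = exp (M / ρ) * ρ ^ e := by
        rw [div_rpow hM.le hρ.le, exp_neg]
        field_simp

lemma rpow_natCast_add_mul_add {ρ : ℝ} (hρ : 0 < ρ) (β : ℝ) (p k s : ℕ) :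
    ρ ^ ((p : ℝ) + β * k + s) = ρ ^ p * (ρ ^ β) ^ k * ρ ^ s := by
  rw [rpow_add_natCast hρ.ne', rpow_add hρ, rpow_natCast, rpow_mul_natCast hρ.le]

open Topology in
lemma exists_pos_mul_le_and_rpow_le {a c β r : ℝ} (hβ : 0 < β) (hr : 0 < r) :
    ∃ ρ, 0 < ρ ∧ a * ρ ≤ r ∧ c * ρ ^ β ≤ r := by
  have h1 : Tendsto (fun ρ : ℝ => a * ρ) (𝓝[>] 0) (𝓝 0) := by
    simpa using ((continuous_const_mul a).tendsto 0).mono_left nhdsWithin_le_nhds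
  have h2 : Tendsto (fun ρ : ℝ => c * ρ ^ β) (𝓝[>] 0) (𝓝 0) := by
    have := ((continuousAt_rpow_const 0 β (Or.inr hβ.le)).const_mul c)
    simpa [zero_rpow hβ.ne'] using this.tendsto.mono_left nhdsWithin_le_nhds
  exact ((eventually_mem_nhdsWithin.and (h1.eventually (eventually_le_nhds hr))).and
    (h2.eventually (eventually_le_nhds hr))).exists.imp fun ρ h => ⟨h.1.1, h.1.2, h.2⟩

lemma summable_pow_mul_pow {a b : ℝ} (ha : 0 ≤ a) (ha1 : a < 1) (hb : 0 ≤ b) (hb1 : b < 1) :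
    Summable fun q : ℕ × ℕ => a ^ q.1 * b ^ q.2 :=
  (summable_geometric_of_lt_one ha ha1).mul_of_nonneg (summable_geometric_of_lt_one hb hb1)
    (fun _ => by positivity) fun _ => by positivity

open Finset in
lemma tsum_tsum_add_eq {f : ℕ → ℝ} (hf : Summable fun q : ℕ × ℕ => f (q.1 + q.2)) :
    ∑' m, ∑' n, f (m + n) = ∑' p, (p + 1) * f p := by
  have hσ := HasAntidiagonal.sigmaAntidiagonalEquivProd.summable_iff.2 hf
  rw [← hf.tsum_prod, ← HasAntidiagonal.sigmaAntidiagonalEquivProd.tsum_eq]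
  refine (hσ.tsum_sigma' fun _ => (hasSum_fintype _).summable).trans (tsum_congr fun p => ?_)
  calc _ = ∑ _q : antidiagonal p, f p :=
        (tsum_fintype _).trans <|
          Fintype.sum_congr _ _ fun q => congrArg f (mem_antidiagonal.1 q.2)
    _ = (p + 1) * f p := by simp

lemma abs_le_abs_natCast_succ_mul (n : ℕ) (a : ℝ) : |a| ≤ |(n + 1) * a| := by
  rw [abs_mul, abs_of_nonneg (by positivity : (0 : ℝ) ≤ n + 1)]
  exact le_mul_of_one_le_left (abs_nonneg _) (by simp)

/-- The `(p, k)` term of the double series `∑ₚ νᵖ xᵖ⁺ˢ M_{β, p+s+1}(w x^β)`. -/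
noncomputable def mittagLefflerTerm (ν w β : ℝ) (s : ℕ) (q : ℕ × ℕ) (x : ℝ) : ℝ :=
  ν ^ q.1 * w ^ q.2 * x ^ ((q.1 : ℝ) + β * q.2 + s) / Gamma ((q.1 : ℝ) + β * q.2 + s + 1)

section MittagLefflerTerm

variable {ν w β : ℝ}

lemma abs_mittagLefflerTerm_le (hβ : 0 < β) (s : ℕ) {M r : ℝ} (hM : 0 < M) (hr : 0 < r) :
    ∃ C, ∀ q x, |x| ≤ M → |mittagLefflerTerm ν w β s q x| ≤ C * r ^ q.1 * r ^ q.2 := by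
  obtain ⟨ρ, hρ, hνρ, hwρ⟩ := exists_pos_mul_le_and_rpow_le (a := |ν|) (c := |w|) hβ hr
  refine ⟨exp (M / ρ) * ρ ^ s, fun ⟨p, k⟩ x hx => ?_⟩
  have he : 0 ≤ (p : ℝ) + β * k + s := by positivity
  calc |mittagLefflerTerm ν w β s (p, k) x|
      = |ν| ^ p * |w| ^ k * (|x ^ ((p : ℝ) + β * k + s)| / Gamma ((p : ℝ) + β * k + s + 1)) := by
        rw [mittagLefflerTerm, abs_div, abs_mul, abs_mul, abs_pow, abs_pow,
          abs_of_pos (Gamma_pos_of_pos (by linarith))]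
        ring
    _ ≤ |ν| ^ p * |w| ^ k * (exp (M / ρ) * ρ ^ ((p : ℝ) + β * k + s)) := by
        gcongr
        exact abs_rpow_div_Gamma_le hM hρ he hx
    _ = exp (M / ρ) * ρ ^ s * (|ν| * ρ) ^ p * (|w| * ρ ^ β) ^ k := by
        rw [rpow_natCast_add_mul_add hρ]
        ring
    _ ≤ exp (M / ρ) * ρ ^ s * r ^ p * r ^ k := by gcongr

lemma exists_summable_bound_mittagLefflerTerm (hβ : 0 < β) (s : ℕ) {M : ℝ} (hM : 0 < M) :
    ∃ u : ℕ × ℕ → ℝ, Summable u ∧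
      ∀ q x, |x| ≤ M → |(q.1 + 1) * mittagLefflerTerm ν w β s q x| ≤ u q := by
  obtain ⟨C, hC⟩ := abs_mittagLefflerTerm_le (ν := ν) (w := w) hβ s hM (r := 4⁻¹) (by norm_num)
  refine ⟨fun q => C * (2⁻¹ ^ q.1 * 4⁻¹ ^ q.2),
    (summable_pow_mul_pow (by norm_num) (by norm_num) (by norm_num) (by norm_num)).mul_left C,
    fun ⟨p, k⟩ x hx => ?_⟩
  have hp : (p + 1 : ℝ) * 4⁻¹ ^ p ≤ 2⁻¹ ^ p := by
    have : (p + 1 : ℝ) ≤ 2 ^ p := by exact_mod_cast Nat.lt_two_pow_self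
    calc (p + 1 : ℝ) * 4⁻¹ ^ p ≤ 2 ^ p * 4⁻¹ ^ p := by gcongr
      _ = 2⁻¹ ^ p := by rw [← mul_pow]; norm_num
  have hC0 : 0 ≤ C := nonneg_of_mul_nonneg_left
    (by simpa only [mul_assoc] using (abs_nonneg _).trans (hC (p, k) x hx)) (by positivity)
  calc |(p + 1 : ℝ) * mittagLefflerTerm ν w β s (p, k) x|
      = (p + 1) * |mittagLefflerTerm ν w β s (p, k) x| := by
        rw [abs_mul, abs_of_nonneg (by positivity)]
    _ ≤ (p + 1) * (C * 4⁻¹ ^ p * 4⁻¹ ^ k) := by gcongr; exact hC (p, k) x hx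
    _ = C * ((p + 1) * 4⁻¹ ^ p) * 4⁻¹ ^ k := by ring
    _ ≤ C * 2⁻¹ ^ p * 4⁻¹ ^ k := by gcongr
    _ = C * (2⁻¹ ^ p * 4⁻¹ ^ k) := by ring

lemma summable_succ_mul_mittagLefflerTerm (hβ : 0 < β) (s : ℕ) (x : ℝ) :
    Summable fun q : ℕ × ℕ => (q.1 + 1) * mittagLefflerTerm ν w β s q x := by
  obtain ⟨u, hu, hbound⟩ :=
    exists_summable_bound_mittagLefflerTerm (ν := ν) (w := w) hβ s (M := |x| + 1) (by positivity)
  exact hu.of_norm_bounded fun q => hbound q x (by linarith)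

lemma summable_mittagLefflerTerm (hβ : 0 < β) (s : ℕ) (x : ℝ) :
    Summable fun q : ℕ × ℕ => mittagLefflerTerm ν w β s q x :=
  (summable_succ_mul_mittagLefflerTerm hβ s x).abs.of_norm_bounded fun q =>
    abs_le_abs_natCast_succ_mul q.1 _

lemma summable_tsum_mittagLefflerTerm_add (hβ : 0 < β) (s : ℕ) (x : ℝ) :
    Summable fun q : ℕ × ℕ => ∑' k, mittagLefflerTerm ν w β s (q.1 + q.2, k) x := by
  obtain ⟨C, hC⟩ := abs_mittagLefflerTerm_le (ν := ν) (w := w) hβ s (M := |x| + 1)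
    (by positivity) (r := 2⁻¹) (by norm_num)
  refine ((summable_pow_mul_pow (a := 2⁻¹) (b := 2⁻¹) (by norm_num) (by norm_num) (by norm_num)
    (by norm_num)).mul_left (2 * C)).of_norm_bounded fun ⟨m, n⟩ => ?_
  calc ‖∑' k, mittagLefflerTerm ν w β s (m + n, k) x‖ ≤ C * 2⁻¹ ^ (m + n) * (1 - 2⁻¹)⁻¹ :=
        tsum_of_norm_bounded ((hasSum_geometric_of_lt_one (by norm_num) (by norm_num)).mul_left _)
          fun k => hC (m + n, k) x (by linarith)
    _ = 2 * C * (2⁻¹ ^ m * 2⁻¹ ^ n) := by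
        rw [pow_add]
        norm_num
        ring

lemma hasDerivAt_mittagLefflerTerm_succ (hβ : 0 ≤ β) (s : ℕ) (q : ℕ × ℕ) (x : ℝ) :
    HasDerivAt (mittagLefflerTerm ν w β (s + 1) q) (mittagLefflerTerm ν w β s q x) x := by
  have hexp : (q.1 : ℝ) + β * q.2 + ((s + 1 : ℕ) : ℝ) = (q.1 + β * q.2 + s) + 1 := by
    push_cast; ring
  have he : 0 ≤ (q.1 : ℝ) + β * q.2 + s := by positivity
  unfold mittagLefflerTerm
  rw [hexp, Gamma_add_one (by positivity)]
  generalize (q.1 : ℝ) + β * q.2 + s = e at he ⊢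
  have hΓ : Gamma (e + 1) ≠ 0 := (Gamma_pos_of_pos (by positivity)).ne'
  refine (((hasDerivAt_rpow_const (p := e + 1) (Or.inr (by linarith))).const_mul
    (ν ^ q.1 * w ^ q.2)).div_const ((e + 1) * Gamma (e + 1))).congr_deriv ?_
  rw [add_sub_cancel_right]
  field_simp

lemma hasDerivAt_tsum_mittagLefflerTerm (hβ : 0 < β) (s : ℕ) (x : ℝ) :
    HasDerivAt (fun y => ∑' q : ℕ × ℕ, (q.1 + 1) * mittagLefflerTerm ν w β (s + 1) q y)
      (∑' q : ℕ × ℕ, (q.1 + 1) * mittagLefflerTerm ν w β s q x) x := by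
  obtain ⟨u, hu, hbound⟩ :=
    exists_summable_bound_mittagLefflerTerm (ν := ν) (w := w) hβ s (M := |x| + 1) (by positivity)
  have hx : x ∈ Set.Ioo (-(|x| + 1)) (|x| + 1) := by
    constructor <;> linarith [neg_abs_le x, le_abs_self x]
  exact hasDerivAt_tsum_of_isPreconnected hu isOpen_Ioo isPreconnected_Ioo
    (fun q y _ => (hasDerivAt_mittagLefflerTerm_succ hβ.le s q y).const_mul _)
    (fun q y hy => hbound q y (abs_le.2 ⟨hy.1.le, hy.2.le⟩)) hx
    (summable_succ_mul_mittagLefflerTerm hβ (s + 1) x) hx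

lemma continuous_tsum_mittagLefflerTerm (hβ : 0 < β) (s : ℕ) :
    Continuous fun x => ∑' q : ℕ × ℕ, mittagLefflerTerm ν w β s q x := by
  refine continuous_iff_continuousAt.2 fun x => ?_
  obtain ⟨u, hu, hbound⟩ :=
    exists_summable_bound_mittagLefflerTerm (ν := ν) (w := w) hβ s (M := |x| + 1) (by positivity)
  refine (continuousOn_tsum (s := Set.Icc (-(|x| + 1)) (|x| + 1)) (fun q => ?_) hu
    fun q y hy => ?_).continuousAt
      (Icc_mem_nhds (by linarith [neg_abs_le x]) (by linarith [le_abs_self x]))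
  · exact ((continuous_const.mul (continuous_rpow_const (by positivity))).div_const _).continuousOn
  · exact (abs_le_abs_natCast_succ_mul q.1 _).trans (hbound q y (abs_le.2 hy))

lemma tsum_succ_mul_mittagLefflerTerm (hβ : 0 < β) (s : ℕ) (x : ℝ) :
    ∑' q : ℕ × ℕ, (q.1 + 1) * mittagLefflerTerm ν w β s q x =
      ∑' q : ℕ × ℕ, mittagLefflerTerm ν w β s q x +
        ν * ∑' q : ℕ × ℕ, (q.1 + 1) * mittagLefflerTerm ν w β (s + 1) q x := by
  have hF := summable_mittagLefflerTerm (ν := ν) (w := w) hβ s x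
  have hsucc : Function.Injective fun q : ℕ × ℕ => (q.1 + 1, q.2) :=
    (add_left_injective 1).prodMap Function.injective_id
  have hsupp : Function.support (fun q : ℕ × ℕ => (q.1 : ℝ) * mittagLefflerTerm ν w β s q x) ⊆
      Set.range fun q : ℕ × ℕ => (q.1 + 1, q.2) := by
    rintro ⟨_ | p, k⟩ h
    · simp at h
    · exact ⟨(p, k), rfl⟩
  have hshift : ∀ q : ℕ × ℕ, ((q.1 + 1 : ℕ) : ℝ) * mittagLefflerTerm ν w β s (q.1 + 1, q.2) x =
      ν * ((q.1 + 1) * mittagLefflerTerm ν w β (s + 1) q x) := by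
    rintro ⟨p, k⟩
    simp only [mittagLefflerTerm]
    push_cast
    ring_nf
  calc ∑' q : ℕ × ℕ, (q.1 + 1) * mittagLefflerTerm ν w β s q x
      = ∑' q : ℕ × ℕ, (mittagLefflerTerm ν w β s q x + q.1 * mittagLefflerTerm ν w β s q x) :=
        tsum_congr fun q => by ring
    _ = ∑' q : ℕ × ℕ, mittagLefflerTerm ν w β s q x +
          ∑' q : ℕ × ℕ, (q.1 : ℝ) * mittagLefflerTerm ν w β s q x :=
        hF.tsum_add (((summable_succ_mul_mittagLefflerTerm hβ s x).sub hF).congr fun q => by ring)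
    _ = _ := by rw [← hsucc.tsum_eq hsupp, tsum_congr hshift, tsum_mul_left]

lemma hasDerivAt_exp_mul_tsum_mittagLefflerTerm (hβ : 0 < β) (s : ℕ) (x : ℝ) :
    HasDerivAt
      (fun y => exp (-ν * y) * ∑' q : ℕ × ℕ, (q.1 + 1) * mittagLefflerTerm ν w β (s + 1) q y)
      (exp (-ν * x) * ∑' q : ℕ × ℕ, mittagLefflerTerm ν w β s q x) x := by
  have hexp : HasDerivAt (fun y => exp (-ν * y)) (exp (-ν * x) * -ν) x := by
    simpa using ((hasDerivAt_id x).const_mul (-ν)).exp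
  refine (hexp.mul (hasDerivAt_tsum_mittagLefflerTerm hβ s x)).congr_deriv ?_
  rw [tsum_succ_mul_mittagLefflerTerm hβ s x]
  ring

lemma tsum_mittagLefflerTerm_snd {t : ℝ} (ht : 0 < t) (s p : ℕ) :
    ∑' k, mittagLefflerTerm ν w β s (p, k) t =
      ν ^ p * t ^ (p + s) * mittagLeffler β (p + s + 1) (w * t ^ β) := by
  rw [mittagLeffler, ← tsum_mul_left]
  refine tsum_congr fun k => ?_
  rw [mittagLefflerTerm, rpow_natCast_add_mul_add ht, mul_pow, pow_add,
    show β * (k : ℝ) + (p + s + 1) = p + β * k + s + 1 by ring]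
  ring

lemma tsum_mul_mittagLefflerTerm {t : ℝ} (ht : 0 < t) (s : ℕ) (c : ℕ → ℝ)
    (hc : Summable fun q : ℕ × ℕ => c q.1 * mittagLefflerTerm ν w β s q t) :
    ∑' q : ℕ × ℕ, c q.1 * mittagLefflerTerm ν w β s q t =
      ∑' p : ℕ, c p * (ν ^ p * t ^ (p + s) * mittagLeffler β (p + s + 1) (w * t ^ β)) := by
  rw [hc.tsum_prod]
  exact tsum_congr fun p => by rw [← tsum_mittagLefflerTerm_snd ht, ← tsum_mul_left]

lemma mittagLefflerTerm_succ_apply_zero (hβ : 0 ≤ β) (s : ℕ) (q : ℕ × ℕ) :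
    mittagLefflerTerm ν w β (s + 1) q 0 = 0 := by
  rw [mittagLefflerTerm, zero_rpow (by positivity), mul_zero, zero_div]

end MittagLefflerTerm

theorem expected_number_of_events_general
    (Λ₀ α γ ν β : ℝ) (hβ : β ∈ Set.Ioo (0 : ℝ) 1)
    (w : ℝ)
    (lam : ℝ → ℝ)
    (hlam : ∀ t, 0 < t → lam t =
      Λ₀ * ((ν ^ β - γ) / w +
        (α * γ * Real.exp (-ν * t) / w) *
          ∑' m : ℕ, ν ^ m * t ^ m * mittagLeffler β (m + 1) (w * t ^ β))) :
    ∀ t, 0 < t →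
      ∫ u in (0 : ℝ)..t, lam u =
        Λ₀ * (((ν ^ β - γ) / w) * t +
          (α * γ * Real.exp (-ν * t) / w) *
            ∑' m : ℕ, ∑' n : ℕ,
              ν ^ (m + n) * t ^ (m + n + 1) * mittagLeffler β (m + n + 2) (w * t ^ β)) := by
  intro t ht
  have hβ0 : 0 < β := hβ.1
  set F : ℝ → ℝ := fun u => ∑' q : ℕ × ℕ, mittagLefflerTerm ν w β 0 q u
  set G : ℝ → ℝ := fun u => ∑' q : ℕ × ℕ, (q.1 + 1) * mittagLefflerTerm ν w β 1 q u
  have hF : ∀ u, 0 < u → ∑' m : ℕ, ν ^ m * u ^ m * mittagLeffler β (m + 1) (w * u ^ β) = F u :=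
    fun u hu => by
      simpa using (tsum_mul_mittagLefflerTerm hu 0 (fun _ => 1)
        (by simpa using summable_mittagLefflerTerm hβ0 0 u)).symm
  have hG : ∑' m : ℕ, ∑' n : ℕ,
      ν ^ (m + n) * t ^ (m + n + 1) * mittagLeffler β (m + n + 2) (w * t ^ β) = G t := by
    rw [show G t = _ from tsum_mul_mittagLefflerTerm ht 1 (fun p => p + 1)
      (summable_succ_mul_mittagLefflerTerm hβ0 1 t), ← tsum_tsum_add_eq]
    · push_cast
      ring_nf
    · simpa [tsum_mittagLefflerTerm_snd ht] using summable_tsum_mittagLefflerTerm_add hβ0 1 t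
  have hG0 : G 0 = 0 := by simp [G, mittagLefflerTerm_succ_apply_zero hβ0.le 0]
  have hN : ∀ u, HasDerivAt
      (fun u => Λ₀ * ((ν ^ β - γ) / w * u + α * γ / w * (exp (-ν * u) * G u)))
      (Λ₀ * ((ν ^ β - γ) / w + α * γ * exp (-ν * u) / w * F u)) u := fun u =>
    (((hasDerivAt_id u).const_mul _).add
      ((hasDerivAt_exp_mul_tsum_mittagLefflerTerm hβ0 0 u).const_mul _)).const_mul Λ₀
      |>.congr_deriv (by simp only [F]; ring)
  rw [intervalIntegral.integral_congr_ae (ae_of_all _ fun u hu => ?_),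
    intervalIntegral.integral_eq_sub_of_hasDerivAt (fun u _ => hN u) ?_, hG, hG0]
  · ring
  · have hFc : Continuous F := continuous_tsum_mittagLefflerTerm hβ0 0
    exact Continuous.intervalIntegrable (by fun_prop) _ _
  · rw [Set.uIoc_of_le ht.le] at hu
    rw [hlam u hu.1, hF u hu.1]

theorem expected_number_of_events
    (Λ₀ α γ ν β : ℝ) (hΛ₀ : 0 < Λ₀) (hα : α ∈ Set.Ioo (0 : ℝ) 1)
    (hγ : 0 < γ) (hν : 0 < ν) (hβ : β ∈ Set.Ioo (0 : ℝ) 1)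
    (w : ℝ) (hw : w = (α - 1) * γ + ν ^ β) (hw0 : w ≠ 0)
    (lam : ℝ → ℝ)
    (hlam : ∀ t, 0 < t → lam t =
      Λ₀ * ((ν ^ β - γ) / w +
        (α * γ * Real.exp (-ν * t) / w) *
          ∑' m : ℕ, ν ^ m * t ^ m * mittagLeffler β (m + 1) (w * t ^ β))) :
    ∀ t, 0 < t →
      ∫ u in (0 : ℝ)..t, lam u =
        Λ₀ * (((ν ^ β - γ) / w) * t +
          (α * γ * Real.exp (-ν * t) / w) *
            ∑' m : ℕ, ∑' n : ℕ,
              ν ^ (m + n) * t ^ (m + n + 1) * mittagLeffler β (m + n + 2) (w * t ^ β)) :=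
  expected_number_of_events_general Λ₀ α γ ν β hβ w lam hlam
end

section
/- (Hardy–Littlewood Tauberian theorem.) Let f : (0,∞) → ℝ be nonnegative, integrable over every finite interval (0,T), and such that t ↦ e^{−st} f(t) is integrable over (0,∞) for every s > 0. Suppose there exist constants H > 0 and a > 0 such that ∫₀^∞ e^{−st} f(t) dt ∼ H s^{−a} as s → 0⁺ (i.e. lim_{s→0⁺} s^a ∫₀^∞ e^{−st} f(t) dt = H). Then ∫₀^t f(u) du ∼ (H/Γ(1+a)) t^a as t → ∞ (i.e. lim_{t→∞} t^{−a} ∫₀^t f(u) du = H/Γ(1+a)). -/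
/-!
Karamata's proof. Put `K_f g s = ∫₀^∞ e^{-st} g(e^{-st}) f(t) dt`. For `g u = u^k` this is the
Laplace transform at `(k + 1) s`, so the hypothesis gives
`s^a K_f g s → H / Γ(a) · K_{t^{a-1}} g 1`; by linearity this holds for polynomials, and since
`f ≥ 0` and `s^a K_f 1 s` stays bounded, Weierstrass approximation extends it to continuous `g`.
Now `∫₀^{1/s} f = K_f g s` for `g u = u⁻¹ 𝟙[u ≥ e⁻¹]`, which lies between continuous functions
whose model values are `(1 ± δ)^a / a`; and `Γ(1 + a) = a Γ(a)`.
-/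

open MeasureTheory Real Filter
open Set Topology

noncomputable def karamataTransform (f g : ℝ → ℝ) (s : ℝ) : ℝ :=
  ∫ t in Ioi 0, exp (-s * t) * g (exp (-s * t)) * f t

variable {f g h : ℝ → ℝ} {a H s : ℝ}

lemma exp_neg_mul_mem_Icc (hs : 0 ≤ s) {t : ℝ} (ht : 0 < t) : exp (-s * t) ∈ Icc (0 : ℝ) 1 :=
  ⟨(exp_pos _).le, exp_le_one_iff.2 (by rw [neg_mul, neg_nonpos]; exact mul_nonneg hs ht.le)⟩

lemma integrableOn_karamata_integrand (hg : Continuous g) (hs : 0 ≤ s)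
    (hf : IntegrableOn (fun t => exp (-s * t) * f t) (Ioi 0)) :
    IntegrableOn (fun t => exp (-s * t) * g (exp (-s * t)) * f t) (Ioi 0) := by
  obtain ⟨C, hC⟩ := isCompact_Icc.exists_bound_of_continuousOn (hg.continuousOn (s := Icc 0 1))
  have hprod := hf.bdd_mul (c := C) (hg.comp (by fun_prop)).aestronglyMeasurable
    ((ae_restrict_iff' measurableSet_Ioi).2
      (Eventually.of_forall fun t ht => hC _ (exp_neg_mul_mem_Icc hs ht)))
  refine hprod.congr (Eventually.of_forall fun t => ?_)
  simp only [Function.comp_apply]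
  ring

lemma integrableOn_Ioc_of_integrableOn_exp_neg_mul
    (hf : IntegrableOn (fun t => exp (-s * t) * f t) (Ioi 0)) (T : ℝ) :
    IntegrableOn f (Ioc 0 T) := by
  have hK : IntegrableOn (fun t => exp (-s * t) * f t) (Icc 0 T) :=
    (integrableOn_Icc_iff_integrableOn_Ioc (by simp)).2 (hf.mono_set Ioc_subset_Ioi_self)
  have hprod := hK.continuousOn_mul (g := fun t => exp (s * t)) (by fun_prop) isCompact_Icc
  refine (hprod.mono_set Ioc_subset_Icc_self).congr_fun (fun t _ => ?_) measurableSet_Ioc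
  simp only [← mul_assoc, ← exp_add]
  simp

lemma integrableOn_exp_neg_one_mul_rpow (ha : 0 < a) :
    IntegrableOn (fun t => exp (-1 * t) * t ^ (a - 1)) (Ioi 0) := by
  simpa only [neg_mul, one_mul] using GammaIntegral_convergent ha

lemma integral_exp_neg_one_mul_rpow (ha : 0 < a) :
    ∫ t in Ioi 0, exp (-1 * t) * t ^ (a - 1) = Gamma a := by
  simpa only [neg_mul, one_mul] using (Gamma_eq_integral ha).symm

lemma integral_rpow_sub_one_Ioc (ha : 0 < a) {T : ℝ} (hT : 0 ≤ T) :
    ∫ t in Ioc 0 T, t ^ (a - 1) = T ^ a / a := by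
  rw [← intervalIntegral.integral_of_le hT, integral_rpow (Or.inl (by linarith)),
    sub_add_cancel, zero_rpow ha.ne', sub_zero]

lemma karamataTransform_add (hg : Continuous g) (hh : Continuous h) (hs : 0 ≤ s)
    (hf : IntegrableOn (fun t => exp (-s * t) * f t) (Ioi 0)) :
    karamataTransform f (g + h) s = karamataTransform f g s + karamataTransform f h s := by
  unfold karamataTransform
  rw [← integral_add (integrableOn_karamata_integrand hg hs hf)
    (integrableOn_karamata_integrand hh hs hf)]
  congr 1
  ext t
  simp only [Pi.add_apply]
  ring

lemma karamataTransform_const_mul (c : ℝ) :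
    karamataTransform f (fun u => c * g u) s = c * karamataTransform f g s := by
  unfold karamataTransform
  rw [← integral_const_mul]
  congr 1
  ext t
  ring

lemma karamataTransform_pow (k : ℕ) :
    karamataTransform f (fun u => u ^ k) s = ∫ t in Ioi 0, exp (-((k + 1) * s) * t) * f t := by
  unfold karamataTransform
  congr 1
  ext t
  simp only
  rw [← exp_nat_mul, ← exp_add]
  congr 2
  ring

lemma karamataTransform_rpow_pow (ha : 0 < a) (k : ℕ) :
    karamataTransform (fun t => t ^ (a - 1)) (fun u => u ^ k) 1
      = Gamma a * ((k : ℝ) + 1) ^ (-a) := by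
  have hk : (0 : ℝ) < k + 1 := by positivity
  rw [karamataTransform_pow, mul_one]
  simp_rw [neg_mul, mul_comm (exp _)]
  rw [integral_rpow_mul_exp_neg_mul_Ioi ha hk, one_div, inv_rpow hk.le, rpow_neg hk.le, mul_comm]

lemma tendsto_rpow_mul_laplace_const_mul
    (hasymp : Tendsto (fun s => s ^ a * ∫ t in Ioi 0, exp (-s * t) * f t) (𝓝[>] 0) (𝓝 H))
    {c : ℝ} (hc : 0 < c) :
    Tendsto (fun s => s ^ a * ∫ t in Ioi 0, exp (-(c * s) * t) * f t) (𝓝[>] 0)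
      (𝓝 (H * c ^ (-a))) := by
  have hmul : Tendsto (fun s => c * s) (𝓝[>] 0) (𝓝[>] 0) := by
    refine tendsto_nhdsWithin_of_tendsto_nhds_of_eventually_within _ ?_
      (eventually_nhdsWithin_of_forall fun s hs => mul_pos hc hs)
    simpa using (tendsto_nhdsWithin_of_tendsto_nhds (continuous_const_mul c).continuousAt.tendsto :
      Tendsto (fun s => c * s) (𝓝[>] 0) (𝓝 (c * 0)))
  rw [mul_comm]
  refine ((hasymp.comp hmul).const_mul (c ^ (-a))).congr' ?_
  filter_upwards [self_mem_nhdsWithin] with s hs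
  rw [Function.comp_apply, mul_rpow hc.le (le_of_lt hs), rpow_neg hc.le, ← mul_assoc,
    inv_mul_cancel_left₀ (rpow_pos_of_pos hc a).ne']

lemma tendsto_karamataTransform_pow (ha : 0 < a)
    (hasymp : Tendsto (fun s => s ^ a * ∫ t in Ioi 0, exp (-s * t) * f t) (𝓝[>] 0) (𝓝 H))
    (k : ℕ) :
    Tendsto (fun s => s ^ a * karamataTransform f (fun u => u ^ k) s) (𝓝[>] 0)
      (𝓝 (H / Gamma a * karamataTransform (fun t => t ^ (a - 1)) (fun u => u ^ k) 1)) := by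
  rw [karamataTransform_rpow_pow ha]
  simp_rw [karamataTransform_pow]
  convert tendsto_rpow_mul_laplace_const_mul hasymp (c := (k : ℝ) + 1) (by positivity) using 2
  field_simp [(Gamma_pos_of_pos ha).ne']

lemma tendsto_karamataTransform_polynomial
    (hf : ∀ s : ℝ, 0 < s → IntegrableOn (fun t => exp (-s * t) * f t) (Ioi 0)) (ha : 0 < a)
    (hasymp : Tendsto (fun s => s ^ a * ∫ t in Ioi 0, exp (-s * t) * f t) (𝓝[>] 0) (𝓝 H))
    (p : Polynomial ℝ) :
    Tendsto (fun s => s ^ a * karamataTransform f (fun u => p.eval u) s) (𝓝[>] 0)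
      (𝓝 (H / Gamma a * karamataTransform (fun t => t ^ (a - 1)) (fun u => p.eval u) 1)) := by
  induction p using Polynomial.induction_on' with
  | add p q hp hq =>
    have hsplit : (fun u => (p + q).eval u) = (fun u => p.eval u) + fun u => q.eval u := by
      ext u
      simp
    have hlim := hp.add hq
    rw [← mul_add, ← karamataTransform_add p.continuous q.continuous zero_le_one
      (integrableOn_exp_neg_one_mul_rpow ha)] at hlim
    rw [hsplit]
    refine hlim.congr' ?_
    filter_upwards [self_mem_nhdsWithin] with s hs
    rw [karamataTransform_add p.continuous q.continuous (le_of_lt hs) (hf s hs), mul_add]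
  | monomial n c =>
    simp only [Polynomial.eval_monomial, karamataTransform_const_mul, mul_left_comm _ c]
    exact (tendsto_karamataTransform_pow ha hasymp n).const_mul c

lemma abs_karamataTransform_sub_le (hf0 : ∀ t, 0 < t → 0 ≤ f t) (hs : 0 ≤ s)
    (hf : IntegrableOn (fun t => exp (-s * t) * f t) (Ioi 0)) (hg : Continuous g)
    (hh : Continuous h) {ε : ℝ} (hgh : ∀ u ∈ Icc (0 : ℝ) 1, |g u - h u| ≤ ε) :
    |karamataTransform f g s - karamataTransform f h s|
      ≤ ε * ∫ t in Ioi 0, exp (-s * t) * f t := by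
  have hgi := integrableOn_karamata_integrand hg hs hf
  have hhi := integrableOn_karamata_integrand hh hs hf
  unfold karamataTransform
  rw [← integral_sub hgi hhi, ← integral_const_mul, ← Real.norm_eq_abs]
  refine (norm_integral_le_integral_norm _).trans
    (setIntegral_mono_on (hgi.sub hhi).norm (hf.const_mul ε) measurableSet_Ioi fun t ht => ?_)
  calc ‖exp (-s * t) * g (exp (-s * t)) * f t - exp (-s * t) * h (exp (-s * t)) * f t‖
      = exp (-s * t) * |g (exp (-s * t)) - h (exp (-s * t))| * f t := by
        rw [Real.norm_eq_abs, ← sub_mul, ← mul_sub, abs_mul, abs_mul, abs_of_pos (exp_pos _),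
          abs_of_nonneg (hf0 t ht)]
    _ ≤ exp (-s * t) * ε * f t := by
        gcongr
        exacts [hf0 t ht, hgh _ (exp_neg_mul_mem_Icc hs ht)]
    _ = ε * (exp (-s * t) * f t) := by ring

lemma tendsto_of_forall_approx {α : Type*} {l : Filter α} {u : α → ℝ} {L : ℝ}
    (h : ∀ ε > 0, ∃ v : α → ℝ, ∃ M, Tendsto v l (𝓝 M) ∧ (∀ᶠ x in l, |u x - v x| ≤ ε) ∧
      |L - M| ≤ ε) :
    Tendsto u l (𝓝 L) := by
  refine Metric.tendsto_nhds.2 fun ε hε => ?_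
  obtain ⟨v, M, hv, huv, hLM⟩ := h (ε / 3) (by positivity)
  filter_upwards [huv, Metric.tendsto_nhds.1 hv (ε / 3) (by positivity)] with x hux hvx
  rw [Real.dist_eq] at hvx ⊢
  rw [abs_sub_comm] at hLM
  linarith [abs_sub_le (u x) (v x) L, abs_sub_le (v x) M L]

lemma tendsto_karamataTransform (hf0 : ∀ t, 0 < t → 0 ≤ f t)
    (hf : ∀ s : ℝ, 0 < s → IntegrableOn (fun t => exp (-s * t) * f t) (Ioi 0)) (ha : 0 < a)
    (hasymp : Tendsto (fun s => s ^ a * ∫ t in Ioi 0, exp (-s * t) * f t) (𝓝[>] 0) (𝓝 H))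
    (hg : Continuous g) :
    Tendsto (fun s => s ^ a * karamataTransform f g s) (𝓝[>] 0)
      (𝓝 (H / Gamma a * karamataTransform (fun t => t ^ (a - 1)) g 1)) := by
  refine tendsto_of_forall_approx fun ε hε => ?_
  set δ := ε / (|H| + 1)
  have hδ : 0 < δ := by positivity
  have hδε : δ * (|H| + 1) = ε := div_mul_cancel₀ ε (by positivity)
  obtain ⟨p, hp⟩ := exists_polynomial_near_of_continuousOn 0 1 g hg.continuousOn δ hδ
  have hgp : ∀ u ∈ Icc (0 : ℝ) 1, |g u - p.eval u| ≤ δ := fun u hu => by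
    rw [abs_sub_comm]
    exact (hp u hu).le
  refine ⟨_, _, tendsto_karamataTransform_polynomial hf ha hasymp p, ?_, ?_⟩
  · have hbound := hasymp.eventually (ge_mem_nhds (by linarith [le_abs_self H] : H < |H| + 1))
    filter_upwards [self_mem_nhdsWithin, hbound] with s hs hsH
    have hsa : 0 ≤ s ^ a := rpow_nonneg (le_of_lt hs) a
    calc |s ^ a * karamataTransform f g s - s ^ a * karamataTransform f (fun u => p.eval u) s|
        = s ^ a * |karamataTransform f g s - karamataTransform f (fun u => p.eval u) s| := by
          rw [← mul_sub, abs_mul, abs_of_nonneg hsa]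
      _ ≤ s ^ a * (δ * ∫ t in Ioi 0, exp (-s * t) * f t) := by
          gcongr
          exact abs_karamataTransform_sub_le hf0 (le_of_lt hs) (hf s hs) hg p.continuous hgp
      _ = δ * (s ^ a * ∫ t in Ioi 0, exp (-s * t) * f t) := by ring
      _ ≤ ε := by rw [← hδε]; gcongr
  · have hΓ := Gamma_pos_of_pos ha
    have hmodel := abs_karamataTransform_sub_le (fun t ht => rpow_nonneg (le_of_lt ht) _)
      zero_le_one (integrableOn_exp_neg_one_mul_rpow ha) hg p.continuous hgp
    rw [integral_exp_neg_one_mul_rpow ha] at hmodel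
    calc |H / Gamma a * karamataTransform (fun t => t ^ (a - 1)) g 1
          - H / Gamma a * karamataTransform (fun t => t ^ (a - 1)) (fun u => p.eval u) 1|
        = |H| / Gamma a * |karamataTransform (fun t => t ^ (a - 1)) g 1
            - karamataTransform (fun t => t ^ (a - 1)) (fun u => p.eval u) 1| := by
          rw [← mul_sub, abs_mul, abs_div, abs_of_pos hΓ]
      _ ≤ |H| / Gamma a * (δ * Gamma a) := by gcongr
      _ = δ * |H| := by field_simp
      _ ≤ ε := by rw [← hδε]; gcongr; linarith

/-- A continuous substitute for `u⁻¹ 𝟙[u ≥ d]`, ramping up linearly on `[c, d]`. -/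
noncomputable def karamataCutoff (c d u : ℝ) : ℝ := max 0 (min 1 ((u - c) / (d - c))) / max u d

section karamataCutoff

variable {c d u : ℝ}

lemma continuous_karamataCutoff (hd : 0 < d) : Continuous (karamataCutoff c d) :=
  (continuous_const.max (continuous_const.min ((continuous_id.sub continuous_const).div_const _))).div
    (continuous_id.max continuous_const) fun u => (hd.trans_le (le_max_right u d)).ne'

lemma karamataCutoff_nonneg (hd : 0 < d) (u : ℝ) : 0 ≤ karamataCutoff c d u :=
  div_nonneg (le_max_left _ _) (hd.le.trans (le_max_right _ _))

lemma mul_karamataCutoff_le_one (hd : 0 < d) (hu : 0 ≤ u) : u * karamataCutoff c d u ≤ 1 := by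
  rw [karamataCutoff, mul_div_left_comm]
  exact mul_le_one₀ (max_le zero_le_one (min_le_left _ _)) (div_nonneg hu (hd.le.trans (le_max_right _ _)))
    (div_le_one_of_le₀ (le_max_left _ _) (hd.le.trans (le_max_right _ _)))

lemma karamataCutoff_eq_zero (hcd : c ≤ d) (hu : u ≤ c) : karamataCutoff c d u = 0 := by
  rw [karamataCutoff, max_eq_left (min_le_of_right_le
    (div_nonpos_of_nonpos_of_nonneg (sub_nonpos.2 hu) (sub_nonneg.2 hcd))), zero_div]

lemma mul_karamataCutoff_eq_one (hd : 0 < d) (hcd : c < d) (hu : d ≤ u) :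
    u * karamataCutoff c d u = 1 := by
  have hramp : 1 ≤ (u - c) / (d - c) := (one_le_div (sub_pos.2 hcd)).2 (by linarith)
  rw [karamataCutoff, min_eq_left hramp, max_eq_right zero_le_one, max_eq_left hu,
    mul_one_div_cancel (hd.trans_le hu).ne']

end karamataCutoff

lemma setIntegral_Ioi_indicator_Ioc (T : ℝ) :
    ∫ t in Ioi 0, (Ioc 0 T).indicator f t = ∫ t in Ioc 0 T, f t := by
  rw [setIntegral_indicator measurableSet_Ioc, inter_eq_right.2 Ioc_subset_Ioi_self]

lemma setIntegral_Ioc_le_karamataTransform (hf0 : ∀ t, 0 < t → 0 ≤ f t) (hs : 0 ≤ s)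
    (hf : IntegrableOn (fun t => exp (-s * t) * f t) (Ioi 0)) (hg : Continuous g)
    (hg0 : ∀ u, 0 ≤ g u) {T : ℝ} (hg1 : ∀ u, exp (-s * T) ≤ u → 1 ≤ u * g u) :
    ∫ t in Ioc 0 T, f t ≤ karamataTransform f g s := by
  rw [← setIntegral_Ioi_indicator_Ioc]
  refine setIntegral_mono_on
    ((integrableOn_Ioc_of_integrableOn_exp_neg_mul hf T).integrable_indicator
      measurableSet_Ioc).integrableOn
    (integrableOn_karamata_integrand hg hs hf) measurableSet_Ioi fun t ht => ?_
  by_cases htT : t ≤ T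
  · rw [indicator_of_mem (show t ∈ Ioc 0 T from ⟨ht, htT⟩)]
    exact le_mul_of_one_le_left (hf0 t ht)
      (hg1 _ (exp_le_exp.2 (by nlinarith)))
  · rw [indicator_of_notMem fun h => htT h.2]
    exact mul_nonneg (mul_nonneg (exp_pos _).le (hg0 _)) (hf0 t ht)

lemma karamataTransform_le_setIntegral_Ioc (hf0 : ∀ t, 0 < t → 0 ≤ f t) (hs : 0 ≤ s)
    (hf : IntegrableOn (fun t => exp (-s * t) * f t) (Ioi 0)) (hg : Continuous g)
    (hg1 : ∀ u, 0 ≤ u → u * g u ≤ 1) {T : ℝ} (hg0 : ∀ u, u ≤ exp (-s * T) → g u = 0) :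
    karamataTransform f g s ≤ ∫ t in Ioc 0 T, f t := by
  rw [← setIntegral_Ioi_indicator_Ioc]
  refine setIntegral_mono_on (integrableOn_karamata_integrand hg hs hf)
    ((integrableOn_Ioc_of_integrableOn_exp_neg_mul hf T).integrable_indicator
      measurableSet_Ioc).integrableOn measurableSet_Ioi fun t ht => ?_
  by_cases htT : t ≤ T
  · rw [indicator_of_mem (show t ∈ Ioc 0 T from ⟨ht, htT⟩)]
    exact mul_le_of_le_one_left (hf0 t ht) (hg1 _ (exp_pos _).le)
  · rw [indicator_of_notMem fun h => htT h.2, hg0 _ (exp_le_exp.2 (by nlinarith)), mul_zero,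
      zero_mul]

lemma eventually_lt_rpow_mul_setIntegral_Ioc_inv (hf0 : ∀ t, 0 < t → 0 ≤ f t)
    (hf : ∀ s : ℝ, 0 < s → IntegrableOn (fun t => exp (-s * t) * f t) (Ioi 0)) (ha : 0 < a)
    (hH : 0 ≤ H)
    (hasymp : Tendsto (fun s => s ^ a * ∫ t in Ioi 0, exp (-s * t) * f t) (𝓝[>] 0) (𝓝 H))
    {T L : ℝ} (hT0 : 0 < T) (hT1 : T < 1) (hL : L < H / Gamma a * (T ^ a / a)) :
    ∀ᶠ s in 𝓝[>] 0, L < s ^ a * ∫ t in Ioc 0 s⁻¹, f t := by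
  set g := karamataCutoff (exp (-1)) (exp (-T))
  have hd : 0 < exp (-T) := exp_pos _
  have hcd : exp (-1) < exp (-T) := exp_lt_exp.2 (by linarith)
  have hg : Continuous g := continuous_karamataCutoff hd
  have hmodel : T ^ a / a ≤ karamataTransform (fun t => t ^ (a - 1)) g 1 := by
    rw [← integral_rpow_sub_one_Ioc ha hT0.le]
    refine setIntegral_Ioc_le_karamataTransform (fun t ht => rpow_nonneg (le_of_lt ht) _)
      zero_le_one (integrableOn_exp_neg_one_mul_rpow ha) hg (karamataCutoff_nonneg hd)
      fun u hu => (mul_karamataCutoff_eq_one hd hcd (by simpa using hu)).ge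
  have hlim : L < H / Gamma a * karamataTransform (fun t => t ^ (a - 1)) g 1 :=
    hL.trans_le (mul_le_mul_of_nonneg_left hmodel (div_nonneg hH (Gamma_pos_of_pos ha).le))
  filter_upwards [(tendsto_karamataTransform hf0 hf ha hasymp hg).eventually (lt_mem_nhds hlim),
    self_mem_nhdsWithin] with s hlt hs
  refine hlt.trans_le (mul_le_mul_of_nonneg_left ?_ (rpow_nonneg (le_of_lt hs) a))
  refine karamataTransform_le_setIntegral_Ioc hf0 (le_of_lt hs) (hf s hs) hg
    (fun u hu => mul_karamataCutoff_le_one hd hu) fun u hu => karamataCutoff_eq_zero hcd.le ?_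
  rwa [neg_mul, mul_inv_cancel₀ (ne_of_gt hs)] at hu

lemma eventually_rpow_mul_setIntegral_Ioc_inv_lt (hf0 : ∀ t, 0 < t → 0 ≤ f t)
    (hf : ∀ s : ℝ, 0 < s → IntegrableOn (fun t => exp (-s * t) * f t) (Ioi 0)) (ha : 0 < a)
    (hH : 0 ≤ H)
    (hasymp : Tendsto (fun s => s ^ a * ∫ t in Ioi 0, exp (-s * t) * f t) (𝓝[>] 0) (𝓝 H))
    {T L : ℝ} (hT1 : 1 < T) (hL : H / Gamma a * (T ^ a / a) < L) :
    ∀ᶠ s in 𝓝[>] 0, s ^ a * ∫ t in Ioc 0 s⁻¹, f t < L := by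
  set g := karamataCutoff (exp (-T)) (exp (-1))
  have hd : 0 < exp (-1) := exp_pos _
  have hcd : exp (-T) < exp (-1) := exp_lt_exp.2 (by linarith)
  have hg : Continuous g := continuous_karamataCutoff hd
  have hmodel : karamataTransform (fun t => t ^ (a - 1)) g 1 ≤ T ^ a / a := by
    rw [← integral_rpow_sub_one_Ioc ha (by linarith)]
    refine karamataTransform_le_setIntegral_Ioc (fun t ht => rpow_nonneg (le_of_lt ht) _)
      zero_le_one (integrableOn_exp_neg_one_mul_rpow ha) hg
      (fun u hu => mul_karamataCutoff_le_one hd hu)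
      fun u hu => karamataCutoff_eq_zero hcd.le (by simpa using hu)
  have hlim : H / Gamma a * karamataTransform (fun t => t ^ (a - 1)) g 1 < L :=
    (mul_le_mul_of_nonneg_left hmodel (div_nonneg hH (Gamma_pos_of_pos ha).le)).trans_lt hL
  filter_upwards [(tendsto_karamataTransform hf0 hf ha hasymp hg).eventually (gt_mem_nhds hlim),
    self_mem_nhdsWithin] with s hlt hs
  refine lt_of_le_of_lt (mul_le_mul_of_nonneg_left ?_ (rpow_nonneg (le_of_lt hs) a)) hlt
  refine setIntegral_Ioc_le_karamataTransform hf0 (le_of_lt hs) (hf s hs) hg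
    (karamataCutoff_nonneg hd) fun u hu => (mul_karamataCutoff_eq_one hd hcd ?_).ge
  rwa [neg_mul, mul_inv_cancel₀ (ne_of_gt hs)] at hu

lemma tendsto_rpow_mul_setIntegral_Ioc_inv (hf0 : ∀ t, 0 < t → 0 ≤ f t)
    (hf : ∀ s : ℝ, 0 < s → IntegrableOn (fun t => exp (-s * t) * f t) (Ioi 0)) (ha : 0 < a)
    (hH : 0 ≤ H)
    (hasymp : Tendsto (fun s => s ^ a * ∫ t in Ioi 0, exp (-s * t) * f t) (𝓝[>] 0) (𝓝 H)) :
    Tendsto (fun s => s ^ a * ∫ t in Ioc 0 s⁻¹, f t) (𝓝[>] 0) (𝓝 (H / Gamma (1 + a))) := by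
  have hbound : Tendsto (fun T : ℝ => H / Gamma a * (T ^ a / a)) (𝓝 1)
      (𝓝 (H / Gamma (1 + a))) := by
    have hlim : H / Gamma (1 + a) = H / Gamma a * (1 ^ a / a) := by
      rw [one_rpow, add_comm, Gamma_add_one ha.ne']
      field_simp
    rw [hlim]
    exact (((continuous_id.rpow_const fun _ => Or.inr ha.le).tendsto 1).div_const a).const_mul _
  refine tendsto_order.2 ⟨fun L hL => ?_, fun L hL => ?_⟩
  · obtain ⟨T, hLT, hT⟩ := (((hbound.eventually (lt_mem_nhds hL)).filter_mono
      nhdsWithin_le_nhds).and (Ioo_mem_nhdsLT zero_lt_one)).exists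
    exact eventually_lt_rpow_mul_setIntegral_Ioc_inv hf0 hf ha hH hasymp hT.1 hT.2 hLT
  · obtain ⟨T, hLT, hT⟩ := (((hbound.eventually (gt_mem_nhds hL)).filter_mono
      nhdsWithin_le_nhds).and (Ioo_mem_nhdsGT one_lt_two)).exists
    exact eventually_rpow_mul_setIntegral_Ioc_inv_lt hf0 hf ha hH hasymp hT.1 hLT

theorem hardy_littlewood_tauberian_general
    (f : ℝ → ℝ) (hf_nonneg : ∀ t, 0 < t → 0 ≤ f t)
    (hf_expint : ∀ s : ℝ, 0 < s →
      MeasureTheory.IntegrableOn (fun t => Real.exp (-s * t) * f t) (Set.Ioi 0))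
    (H a : ℝ) (ha : 0 < a)
    (hasymp : Filter.Tendsto
      (fun s : ℝ => s ^ a * ∫ t in Set.Ioi (0 : ℝ), Real.exp (-s * t) * f t)
      (nhdsWithin 0 (Set.Ioi 0)) (nhds H)) :
    Filter.Tendsto (fun t : ℝ => t ^ (-a) * ∫ u in (0 : ℝ)..t, f u)
      Filter.atTop (nhds (H / Real.Gamma (1 + a))) := by
  have hH : 0 ≤ H := ge_of_tendsto hasymp (eventually_nhdsWithin_of_forall fun s hs =>
    mul_nonneg (rpow_nonneg (le_of_lt hs) a)
      (setIntegral_nonneg measurableSet_Ioi fun t ht => mul_nonneg (exp_pos _).le (hf_nonneg t ht)))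
  refine ((tendsto_rpow_mul_setIntegral_Ioc_inv hf_nonneg hf_expint ha hH hasymp).comp
    tendsto_inv_atTop_nhdsGT_zero).congr' ?_
  filter_upwards [eventually_gt_atTop 0] with t ht
  rw [Function.comp_apply, inv_inv, inv_rpow ht.le, ← rpow_neg ht.le,
    intervalIntegral.integral_of_le ht.le]

theorem hardy_littlewood_tauberian
    (f : ℝ → ℝ) (hf_nonneg : ∀ t, 0 < t → 0 ≤ f t)
    (hf_locint : ∀ T : ℝ, 0 < T → MeasureTheory.IntegrableOn f (Set.Ioo 0 T))
    (hf_expint : ∀ s : ℝ, 0 < s →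
      MeasureTheory.IntegrableOn (fun t => Real.exp (-s * t) * f t) (Set.Ioi 0))
    (H a : ℝ) (hH : 0 < H) (ha : 0 < a)
    (hasymp : Filter.Tendsto
      (fun s : ℝ => s ^ a * ∫ t in Set.Ioi (0 : ℝ), Real.exp (-s * t) * f t)
      (nhdsWithin 0 (Set.Ioi 0)) (nhds H)) :
    Filter.Tendsto (fun t : ℝ => t ^ (-a) * ∫ u in (0 : ℝ)..t, f u)
      Filter.atTop (nhds (H / Real.Gamma (1 + a))) :=
  hardy_littlewood_tauberian_general f hf_nonneg hf_expint H a ha hasymp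
end

section
/- Let ρ > 0, μ > 0, ν > 0, c > 0, w ∈ ℝ and t > 0. Then ∫₀^t y^{μ−1} M^c_{ρ,μ}(w y^ρ) (t − y)^{ν−1} dy = Γ(ν) t^{μ+ν−1} M^c_{ρ, μ+ν}(w t^ρ), where M^c_{a,b}(z) = Σ_{n=0}^∞ (c)_n z^n / (n! Γ(an + b)) is the three-parameter (Prabhakar) Mittag-Leffler function and (c)_n is the Pochhammer symbol. -/
open MeasureTheory Real Filter

/-!
Expand the Mittag-Leffler function into its power series. Term by term the convolution is a Beta
integral, `∫₀ᵗ y^(ρn+μ-1) (t-y)^(ν-1) dy = Γ(ρn+μ) Γ(ν) / Γ(ρn+μ+ν) · t^(ρn+μ+ν-1)`, whose factor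
`Γ(ρn+μ)` cancels the one in the `n`-th coefficient and leaves `Γ(ν) t^(μ+ν-1)` times the `n`-th
term of `M^c_{ρ,μ+ν}(w t^ρ)`. Sum and integral may be exchanged because the same computation with
`|w|` in place of `w` gives a convergent series: by log-convexity `Γ(x+ρ)/Γ(x) → ∞`, so the ratio
test shows that the Prabhakar series converges for every argument.
-/

open Set Topology

theorem intervalIntegral.integral_tsum_of_summable_integral_norm {ι E : Type*} [Countable ι]
    [NormedAddCommGroup E] [NormedSpace ℝ E] {F : ι → ℝ → E} {a b : ℝ} {μ : Measure ℝ}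
    (hF_int : ∀ i, IntervalIntegrable (F i) μ a b)
    (hF_sum : Summable fun i => ∫ x in a..b, ‖F i x‖ ∂μ) :
    ∑' i, ∫ x in a..b, F i x ∂μ = ∫ x in a..b, ∑' i, F i x ∂μ := by
  wlog hab : a ≤ b generalizing a b
  · simp only [integral_symm b a] at hF_sum ⊢
    rw [tsum_neg, this (fun i => (hF_int i).symm) (by simpa using hF_sum.neg) (le_of_not_ge hab)]
  simp only [integral_of_le hab] at hF_sum ⊢
  exact MeasureTheory.integral_tsum_of_summable_integral_norm (fun i => (hF_int i).1) hF_sum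

theorem integral_rpow_mul_one_sub_rpow {a b : ℝ} (ha : 0 < a) (hb : 0 < b) :
    ∫ x in (0 : ℝ)..1, x ^ (a - 1) * (1 - x) ^ (b - 1) = Gamma a * Gamma b / Gamma (a + b) := by
  have hβ : Complex.betaIntegral a b = ↑(∫ x in (0 : ℝ)..1, x ^ (a - 1) * (1 - x) ^ (b - 1)) := by
    rw [Complex.betaIntegral, ← intervalIntegral.integral_ofReal]
    refine intervalIntegral.integral_congr fun x hx => ?_
    rw [uIcc_of_le zero_le_one] at hx
    push_cast [Complex.ofReal_cpow hx.1, Complex.ofReal_cpow (sub_nonneg.2 hx.2)]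
    rfl
  have := Complex.betaIntegral_eq_Gamma_mul_div a b (by simpa) (by simpa)
  rw [hβ, ← Complex.ofReal_add, Complex.Gamma_ofReal, Complex.Gamma_ofReal,
    Complex.Gamma_ofReal] at this
  exact_mod_cast this

theorem integral_rpow_mul_sub_rpow {a b t : ℝ} (ha : 0 < a) (hb : 0 < b) (ht : 0 < t) :
    ∫ y in (0 : ℝ)..t, y ^ (a - 1) * (t - y) ^ (b - 1) =
      Gamma a * Gamma b / Gamma (a + b) * t ^ (a + b - 1) := by
  have hscale : ∀ x ∈ uIcc (0 : ℝ) 1, (t * x) ^ (a - 1) * (t - t * x) ^ (b - 1) =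
      t ^ (a + b - 2) * (x ^ (a - 1) * (1 - x) ^ (b - 1)) := by
    intro x hx
    rw [uIcc_of_le zero_le_one] at hx
    rw [← mul_one_sub, mul_rpow ht.le hx.1, mul_rpow ht.le (sub_nonneg.2 hx.2),
      show a + b - 2 = (a - 1) + (b - 1) by ring, rpow_add ht]
    ring
  have := intervalIntegral.smul_integral_comp_mul_left
    (fun y => y ^ (a - 1) * (t - y) ^ (b - 1)) t (a := 0) (b := 1)
  rw [mul_zero, mul_one] at this
  rw [← this, intervalIntegral.integral_congr hscale, intervalIntegral.integral_const_mul,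
    integral_rpow_mul_one_sub_rpow ha hb, smul_eq_mul,
    show a + b - 1 = 1 + (a + b - 2) by ring, rpow_add ht, rpow_one]
  ring

theorem intervalIntegrable_rpow_mul_sub_rpow {a b t : ℝ} (ha : 0 < a) (hb : 0 < b) (ht : 0 < t) :
    IntervalIntegrable (fun y => y ^ (a - 1) * (t - y) ^ (b - 1)) volume 0 t := by
  refine intervalIntegral.intervalIntegrable_of_integral_ne_zero ?_
  rw [integral_rpow_mul_sub_rpow ha hb ht]
  have := Gamma_pos_of_pos ha
  have := Gamma_pos_of_pos hb
  have := Gamma_pos_of_pos (add_pos ha hb)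
  positivity

namespace Real

theorem Gamma_mul_natCast_add_pos {a b : ℝ} (ha : 0 ≤ a) (hb : 0 < b) (n : ℕ) :
    0 < Gamma (a * n + b) :=
  Gamma_pos_of_pos (by positivity)

-- Slopes of the convex function `log ∘ Gamma` on `x - 1 < x < x + a`; the left one is `log (x - 1)`.
theorem Gamma_mul_rpow_le_Gamma_add {a x : ℝ} (ha : 0 < a) (hx : 1 < x) :
    Gamma x * (x - 1) ^ a ≤ Gamma (x + a) := by
  have hslope := convexOn_log_Gamma.slope_mono_adjacent (x := x - 1) (y := x) (z := x + a)
    (by simp; linarith) (by simp; linarith) (by linarith) (by linarith)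
  have hrec : Gamma x = (x - 1) * Gamma (x - 1) := by
    simpa using Gamma_add_one (s := x - 1) (by linarith)
  have hx1 : 0 < x - 1 := by linarith
  have hG := Gamma_pos_of_pos (by linarith : 0 < x)
  simp only [Function.comp_apply, sub_sub_cancel, div_one, add_sub_cancel_left] at hslope
  have hlog : log (Gamma x) - log (Gamma (x - 1)) = log (x - 1) := by
    rw [hrec, log_mul hx1.ne' (Gamma_pos_of_pos hx1).ne']
    ring
  rw [hlog, le_div_iff₀ ha] at hslope
  rw [← log_le_log_iff (by positivity) (Gamma_pos_of_pos (by linarith)),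
    log_mul hG.ne' (by positivity), log_rpow hx1]
  linarith

theorem tendsto_Gamma_add_div_Gamma_atTop {a : ℝ} (ha : 0 < a) :
    Tendsto (fun x => Gamma (x + a) / Gamma x) atTop atTop := by
  have hpow : Tendsto (fun x : ℝ => (x - 1) ^ a) atTop atTop :=
    (tendsto_rpow_atTop ha).comp (tendsto_atTop_add_const_right atTop (-1) tendsto_id)
  refine tendsto_atTop_mono' atTop ?_ hpow
  filter_upwards [eventually_gt_atTop 1] with x hx
  rw [le_div_iff₀ (Gamma_pos_of_pos (by linarith)), mul_comm]
  exact Gamma_mul_rpow_le_Gamma_add ha hx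

end Real

noncomputable def prabhakarTerm (a b c z : ℝ) (n : ℕ) : ℝ :=
  (ascPochhammer ℝ n).eval c * z ^ n / (n.factorial * Gamma (a * n + b))

theorem prabhakarML_eq_tsum (a b c z : ℝ) :
    prabhakarML a b c z = ∑' n, prabhakarTerm a b c z n := rfl

section prabhakarTerm

variable {a b c : ℝ}

theorem prabhakarTerm_mul_rpow {w r y : ℝ} (hy : 0 ≤ y) (n : ℕ) :
    prabhakarTerm a b c (w * y ^ r) n = prabhakarTerm a b c w n * y ^ (r * n) := by
  rw [prabhakarTerm, prabhakarTerm, mul_pow, ← rpow_natCast (y ^ r), ← rpow_mul hy]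
  ring

theorem abs_prabhakarTerm (ha : 0 ≤ a) (hb : 0 < b) (hc : 0 < c) (z : ℝ) (n : ℕ) :
    |prabhakarTerm a b c z n| = prabhakarTerm a b c |z| n := by
  have hpoch := ascPochhammer_pos n c hc
  have hΓ := Gamma_mul_natCast_add_pos ha hb n
  rw [prabhakarTerm, prabhakarTerm, abs_div, abs_mul, abs_pow, abs_of_pos hpoch,
    abs_of_pos (by positivity : (0 : ℝ) < n.factorial * Gamma (a * n + b))]

theorem prabhakarTerm_ne_zero (ha : 0 ≤ a) (hb : 0 < b) (hc : 0 < c) {z : ℝ} (hz : z ≠ 0)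
    (n : ℕ) : prabhakarTerm a b c z n ≠ 0 := by
  have := ascPochhammer_pos n c hc
  have := Gamma_mul_natCast_add_pos ha hb n
  unfold prabhakarTerm
  positivity

theorem prabhakarTerm_succ (ha : 0 ≤ a) (hb : 0 < b) (z : ℝ) (n : ℕ) :
    prabhakarTerm a b c z (n + 1) = prabhakarTerm a b c z n *
      ((c + n) / (n + 1) * z / (Gamma (a * n + b + a) / Gamma (a * n + b))) := by
  have := Gamma_mul_natCast_add_pos ha hb n
  have := Gamma_mul_natCast_add_pos ha hb (n + 1)
  rw [prabhakarTerm, prabhakarTerm, ascPochhammer_succ_eval, Nat.factorial_succ, pow_succ]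
  push_cast
  rw [show a * (n + 1) + b = a * n + b + a by ring]
  field_simp

theorem summable_prabhakarTerm (ha : 0 < a) (hb : 0 < b) (hc : 0 < c) (z : ℝ) :
    Summable (prabhakarTerm a b c z) := by
  rcases eq_or_ne z 0 with rfl | hz
  · refine summable_of_ne_finset_zero (s := {0}) fun n hn => ?_
    simp [prabhakarTerm, zero_pow (Finset.notMem_singleton.1 hn)]
  refine summable_of_ratio_test_tendsto_lt_one zero_lt_one
    (.of_forall (prabhakarTerm_ne_zero ha.le hb hc hz)) ?_
  have hΓ : Tendsto (fun n : ℕ => Gamma (a * n + b + a) / Gamma (a * n + b)) atTop atTop :=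
    (tendsto_Gamma_add_div_Gamma_atTop ha).comp (tendsto_atTop_add_const_right _ b
      (tendsto_natCast_atTop_atTop.const_mul_atTop ha))
  have hcoef : Tendsto (fun n : ℕ => (c + n) / (n + 1)) atTop (𝓝 1) := by
    have := tendsto_add_mul_div_add_mul_atTop_nhds c 1 (1 : ℝ) one_ne_zero
    simp only [one_mul, div_one] at this
    exact this.congr fun n => by rw [add_comm 1]
  refine ((hcoef.mul_const ‖z‖).div_atTop hΓ).congr fun n => ?_
  rw [prabhakarTerm_succ ha.le hb, norm_mul,
    mul_div_cancel_left₀ _ (norm_ne_zero_iff.2 (prabhakarTerm_ne_zero ha.le hb hc hz n))]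
  have := Gamma_mul_natCast_add_pos ha.le hb n
  have := Gamma_pos_of_pos (by positivity : 0 < a * n + b + a)
  rw [norm_div, norm_mul, Real.norm_of_nonneg (by positivity : 0 ≤ (c + n) / (n + 1 : ℝ)),
    Real.norm_of_nonneg (by positivity : 0 ≤ Gamma (a * n + b + a) / Gamma (a * n + b))]

end prabhakarTerm

theorem integral_prabhakarTerm_mul_rpow_mul_sub_rpow {ρ μ ν t : ℝ} (c w : ℝ) (hρ : 0 ≤ ρ)
    (hμ : 0 < μ) (hν : 0 < ν) (ht : 0 < t) (n : ℕ) :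
    ∫ y in (0 : ℝ)..t, prabhakarTerm ρ μ c w n * (y ^ (ρ * n + μ - 1) * (t - y) ^ (ν - 1)) =
      Gamma ν * t ^ (μ + ν - 1) * prabhakarTerm ρ (μ + ν) c (w * t ^ ρ) n := by
  have hΓ := Gamma_mul_natCast_add_pos hρ hμ n
  have hΓ' := Gamma_mul_natCast_add_pos hρ (add_pos hμ hν) n
  rw [intervalIntegral.integral_const_mul, integral_rpow_mul_sub_rpow (by positivity) hν ht,
    prabhakarTerm_mul_rpow ht.le, show ρ * n + μ + ν - 1 = ρ * n + (μ + ν - 1) by ring,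
    show ρ * n + μ + ν = ρ * n + (μ + ν) by ring, rpow_add ht, prabhakarTerm, prabhakarTerm]
  field_simp

theorem rpow_mul_prabhakarML_eq_tsum (ρ μ c w : ℝ) {y : ℝ} (hy : 0 < y) :
    y ^ (μ - 1) * prabhakarML ρ μ c (w * y ^ ρ) =
      ∑' n : ℕ, prabhakarTerm ρ μ c w n * y ^ (ρ * n + μ - 1) := by
  rw [prabhakarML_eq_tsum, ← tsum_mul_left]
  refine tsum_congr fun n => ?_
  rw [prabhakarTerm_mul_rpow hy.le, add_sub_assoc, rpow_add hy]
  ring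

theorem prabhakarML_convolution
    (ρ μ ν c w : ℝ) (hρ : 0 < ρ) (hμ : 0 < μ) (hν : 0 < ν) (hc : 0 < c)
    (t : ℝ) (ht : 0 < t) :
    ∫ y in (0 : ℝ)..t, y ^ (μ - 1) * prabhakarML ρ μ c (w * y ^ ρ) * (t - y) ^ (ν - 1) =
      Real.Gamma ν * t ^ (μ + ν - 1) * prabhakarML ρ (μ + ν) c (w * t ^ ρ) := by
  set g : ℕ → ℝ → ℝ := fun n y =>
    prabhakarTerm ρ μ c w n * (y ^ (ρ * n + μ - 1) * (t - y) ^ (ν - 1))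
  have hg_int (n : ℕ) : IntervalIntegrable (g n) volume 0 t :=
    (intervalIntegrable_rpow_mul_sub_rpow (by positivity) hν ht).const_mul _
  have hg_norm (n : ℕ) : ∫ y in (0 : ℝ)..t, ‖g n y‖ =
      Gamma ν * t ^ (μ + ν - 1) * prabhakarTerm ρ (μ + ν) c (|w| * t ^ ρ) n := by
    rw [← integral_prabhakarTerm_mul_rpow_mul_sub_rpow c |w| hρ.le hμ hν ht]
    refine intervalIntegral.integral_congr fun y hy => ?_
    rw [uIcc_of_le ht.le] at hy
    rw [Real.norm_eq_abs, abs_mul, abs_prabhakarTerm hρ.le hμ hc,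
      abs_of_nonneg (mul_nonneg (rpow_nonneg hy.1 _) (rpow_nonneg (sub_nonneg.2 hy.2) _))]
  have hg_sum : Summable fun n => ∫ y in (0 : ℝ)..t, ‖g n y‖ := by
    simp only [hg_norm]
    exact (summable_prabhakarTerm hρ (add_pos hμ hν) hc _).mul_left _
  calc ∫ y in (0 : ℝ)..t, y ^ (μ - 1) * prabhakarML ρ μ c (w * y ^ ρ) * (t - y) ^ (ν - 1)
      = ∫ y in (0 : ℝ)..t, ∑' n, g n y := by
        refine intervalIntegral.integral_congr_ae (.of_forall fun y hy => ?_)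
        rw [uIoc_of_le ht.le] at hy
        rw [rpow_mul_prabhakarML_eq_tsum ρ μ c w hy.1, ← tsum_mul_right]
        simp only [g, mul_assoc]
    _ = ∑' n, Gamma ν * t ^ (μ + ν - 1) * prabhakarTerm ρ (μ + ν) c (w * t ^ ρ) n := by
        rw [← intervalIntegral.integral_tsum_of_summable_integral_norm hg_int hg_sum]
        exact tsum_congr (integral_prabhakarTerm_mul_rpow_mul_sub_rpow c w hρ.le hμ hν ht)
    _ = Gamma ν * t ^ (μ + ν - 1) * prabhakarML ρ (μ + ν) c (w * t ^ ρ) := by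
        rw [tsum_mul_left, prabhakarML_eq_tsum]
end
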